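/- arXiv:2004.08934 — 4 statements merged into one kernel-verified Lean document; each statement's English description precedes it below -/
import Mathlib

section
/- Let Λ ⊂ Γ_V be a set of pairs all at the same positive time-separation t, i.e., τ(x,y) = t for all (x,y) ∈ Λ. Then for each 0 < p < 1 the set Λ is ℓ^p-cyclically monotone. -/
open Classical

lemma ereal_coe_sum {ι : Type*} (s : Finset ι) (g : ι → ℝ) :
    ((∑ i ∈ s, g i : ℝ) : EReal) = ∑ i ∈ s, ((g i : ℝ) : EReal) :=
  map_sum (⟨⟨Real.toEReal, EReal.coe_zero⟩, fun x y => EReal.coe_add x y⟩ :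
    ℝ →+ EReal) g s

lemma ereal_sum_eq_bot {ι : Type*} [Fintype ι] (g : ι → EReal) (j : ι) (h : g j = ⊥) :
    ∑ i, g i = ⊥ := by
  classical
  rw [← Finset.add_sum_erase _ _ (Finset.mem_univ j), h, EReal.bot_add]

lemma concave_key (m : ℕ) (p t : ℝ) (hp : 0 < p) (hp1 : p < 1) (ht : 0 < t)
    (a : Fin (m + 1) → ℝ) (ha : ∀ i, 0 ≤ a i) (hsum : ∑ i, a i ≤ (m + 1) * t) :
    ∑ i, a i ^ p ≤ (m + 1) * t ^ p := by
  have hm : (0 : ℝ) < (m + 1 : ℝ) := by positivity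
  have hconc : ConcaveOn ℝ (Set.Ici 0) fun x : ℝ => x ^ p :=
    Real.concaveOn_rpow hp.le hp1.le
  have h := hconc.le_map_sum (t := Finset.univ) (w := fun _ : Fin (m + 1) => ((m : ℝ) + 1)⁻¹)
    (p := a) (fun i _ => by positivity)
    (by simp [Finset.sum_const]; field_simp)
    (fun i _ => ha i)
  simp only [smul_eq_mul] at h
  have h2 : ∑ i, ((m : ℝ) + 1)⁻¹ * a i ≤ t := by
    rw [← Finset.mul_sum]
    rw [inv_mul_le_iff₀ hm]
    exact_mod_cast hsum
  have h3 : (∑ i, ((m : ℝ) + 1)⁻¹ * a i) ^ p ≤ t ^ p := by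
    apply Real.rpow_le_rpow _ h2 hp.le
    exact Finset.sum_nonneg fun i _ => mul_nonneg (by positivity) (ha i)
  have h4 : ∑ i, ((m : ℝ) + 1)⁻¹ * (a i ^ p) ≤ t ^ p := le_trans h h3
  rw [← Finset.mul_sum, inv_mul_le_iff₀ hm] at h4
  exact_mod_cast h4


/-- The cost `ℓ(x,z) = τ(x,z)` if `x ≤ z`, and `−∞` otherwise. -/
noncomputable def ellC {X : Type*} (le : X → X → Prop) (τ : X → X → ℝ) : X → X → EReal :=
  fun x z => if le x z then ((τ x z : ℝ) : EReal) else ⊥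

/-- The chronological future `I⁺(V)` of a set `V`. -/
def IplusSet {X : Type*} (chron : X → X → Prop) (V : Set X) : Set X :=
  {x | ∃ v ∈ V, chron v x}

/-- The transport relation associated to an achronal set `V`:
`Γ_V = {(x,z) ∈ (I⁺(V) ∪ V)² : x ≤ z, τ_V(z) − τ_V(x) = τ(x,z) > 0} ∪ diagonal`. -/
def GammaV {X : Type*} (le chron : X → X → Prop) (τ : X → X → ℝ) (τV : X → ℝ)
    (V : Set X) : Set (X × X) :=
  {q | (q.1 ∈ IplusSet chron V ∪ V ∧ q.2 ∈ IplusSet chron V ∪ V ∧ le q.1 q.2 ∧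
          τV q.2 - τV q.1 = τ q.1 q.2 ∧ 0 < τ q.1 q.2) ∨
       (q.1 = q.2 ∧ q.1 ∈ IplusSet chron V ∪ V)}

/-- The cost `ℓ^p(x,z) = τ(x,z)^p` if `x ≤ z`, and `−∞` otherwise. -/
noncomputable def ellPow {X : Type*} (le : X → X → Prop) (τ : X → X → ℝ) (p : ℝ) :
    X → X → EReal := fun x z => if le x z then ((τ x z ^ p : ℝ) : EReal) else ⊥

/-- If `Λ ⊆ Γ_V` consists of pairs all at the same positive time-separation `t`, then for each
`0 < p < 1` the set `Λ` is `ℓ^p`-cyclically monotone. -/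
theorem stmt_9 {X : Type*} (le chron : X → X → Prop) (τ : X → X → ℝ) (τV : X → ℝ)
    (V : Set X)
    (hrefl : ∀ x, le x x) (htrans : Transitive le)
    (hchron : ∀ a b, chron a b → le a b)
    (hτnn : ∀ x y, 0 ≤ τ x y)
    (hach : ∀ a ∈ V, ∀ b ∈ V, ¬ chron a b)
    (hkey : ∀ x z, x ∈ IplusSet chron V ∪ V → z ∈ IplusSet chron V ∪ V → le x z →
      τ x z ≤ τV z - τV x)
    (p : ℝ) (hp : p ∈ Set.Ioo (0 : ℝ) 1)
    (Λ : Set (X × X)) (hΛ : Λ ⊆ GammaV le chron τ τV V)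
    (t : ℝ) (ht : 0 < t) (hΛt : ∀ q ∈ Λ, τ q.1 q.2 = t)
    (n : ℕ) (f : Fin (n + 1) → X × X) (hf : ∀ i, f i ∈ Λ) :
    ∑ i : Fin (n + 1), ellPow le τ p (f (i + 1)).1 (f i).2 ≤
      ∑ i : Fin (n + 1), ellPow le τ p (f i).1 (f i).2 := by

  obtain ⟨hp0, hp1⟩ := hp
  by_cases hle : ∀ i : Fin (n + 1), le (f (i + 1)).1 (f i).2
  · have hmem1 : ∀ i, (f i).1 ∈ IplusSet chron V ∪ V := fun i => by
      rcases hΛ (hf i) with h | h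
      · exact h.1
      · exact h.2
    have hmem2 : ∀ i, (f i).2 ∈ IplusSet chron V ∪ V := fun i => by
      rcases hΛ (hf i) with h | h
      · exact h.2.1
      · exact h.1 ▸ h.2
    have hle2 : ∀ i, le (f i).1 (f i).2 := fun i => by
      rcases hΛ (hf i) with h | h
      · exact h.2.2.1
      · exact h.1 ▸ hrefl _
    set a : Fin (n + 1) → ℝ := fun i => τ (f (i + 1)).1 (f i).2 with ha
    have hbound : ∀ i, τV (f i).2 - τV (f i).1 ≤ t := fun i => by
      rcases hΛ (hf i) with h | h
      · rw [h.2.2.2.1, hΛt _ (hf i)]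
      · rw [h.1]; simpa using ht.le
    have hsum : ∑ i, a i ≤ (n + 1) * t := by
      have h1 : ∀ i, a i ≤ τV (f i).2 - τV (f (i + 1)).1 :=
        fun i => hkey _ _ (hmem1 _) (hmem2 _) (hle i)
      calc ∑ i, a i ≤ ∑ i, (τV (f i).2 - τV (f (i + 1)).1) :=
            Finset.sum_le_sum fun i _ => h1 i
        _ = ∑ i, (τV (f i).2 - τV (f i).1) := by
            rw [Finset.sum_sub_distrib, Finset.sum_sub_distrib]
            congr 1
            exact Equiv.sum_comp (Equiv.addRight 1) fun i => τV (f i).1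
        _ ≤ ∑ _i : Fin (n + 1), t := Finset.sum_le_sum fun i _ => hbound i
        _ = (n + 1) * t := by simp [Finset.sum_const, mul_comm]
    have hkey2 := concave_key n p t hp0 hp1 ht a (fun i => hτnn _ _) hsum
    have lhs_eq : ∀ i, ellPow le τ p (f (i + 1)).1 (f i).2 = ((a i ^ p : ℝ) : EReal) :=
      fun i => by simp only [ellPow, if_pos (hle i), ha]
    have rhs_eq : ∀ i, ellPow le τ p (f i).1 (f i).2 = ((t ^ p : ℝ) : EReal) :=
      fun i => by simp only [ellPow, if_pos (hle2 i), hΛt _ (hf i)]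
    calc ∑ i, ellPow le τ p (f (i + 1)).1 (f i).2
        = ((∑ i, a i ^ p : ℝ) : EReal) := by
          rw [Finset.sum_congr rfl fun i _ => lhs_eq i, ereal_coe_sum]
      _ ≤ (((n + 1) * t ^ p : ℝ) : EReal) := by exact_mod_cast hkey2
      _ = ((∑ _i : Fin (n + 1), t ^ p : ℝ) : EReal) := by
          rw [EReal.coe_eq_coe_iff]
          simp [Finset.sum_const, mul_comm]
      _ = ∑ i : Fin (n + 1), ellPow le τ p (f i).1 (f i).2 := by
          rw [ereal_coe_sum, Finset.sum_congr rfl fun i _ => rhs_eq i]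
  · push_neg at hle
    obtain ⟨j, hj⟩ := hle
    have hbot : ellPow le τ p (f (j + 1)).1 (f j).2 = ⊥ := by
      simp [ellPow, if_neg hj]
    rw [ereal_sum_eq_bot _ j hbot]
    exact bot_le
end

section
/- The entropic convexity inequality implies the timelike Brunn–Minkowski inequality: if A₀, A₁ are measurable sets with 0 < 𝔪(A_i) < ∞, μ_i := 𝔪|_{A_i}/𝔪(A_i), and there is an ℓ_p-geodesic (μ_t) and a coupling π with U_N(μ_t|𝔪) ≥ σ^{(1−t)}_{K/N}(‖τ‖_{L²(π)}) 𝔪(A₀)^{1/N} + σ^{(t)}_{K/N}(‖τ‖_{L²(π)}) 𝔪(A₁)^{1/N}, then 𝔪(A_t)^{1/N} ≥ σ^{(1−t)}_{K/N}(Θ) 𝔪(A₀)^{1/N} + σ^{(t)}_{K/N}(Θ) 𝔪(A₁)^{1/N}, where A_t is any set on which μ_t is concentrated, Θ = sup{τ(x₀,x₁) : x_i ∈ A_i} if K < 0 and Θ = inf{τ(x₀,x₁) : x_i ∈ A_i} if K ≥ 0. -/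
open MeasureTheory Classical

/-- The Boltzmann relative entropy `Ent(μ|𝔪) = ∫ ρ log ρ d𝔪` if `μ = ρ𝔪` with positive part
`(ρ log ρ)₊` integrable, and `+∞` otherwise. -/
noncomputable def entropy {X : Type*} [MeasurableSpace X] (μ m : Measure X) : EReal :=
  if μ ≪ m ∧ Integrable
      (fun x => max ((μ.rnDeriv m x).toReal * Real.log (μ.rnDeriv m x).toReal) 0) m
  then (((∫ x, (μ.rnDeriv m x).toReal * Real.log (μ.rnDeriv m x).toReal ∂m) : ℝ) : EReal)
  else ⊤

/-- The comparison function `𝔰_κ`: `sin(√κ θ)/√κ` for `κ > 0`, `θ` for `κ = 0`, and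
`sinh(√−κ θ)/√−κ` for `κ < 0`. -/
noncomputable def sK (κ θ : ℝ) : ℝ :=
  if 0 < κ then Real.sin (Real.sqrt κ * θ) / Real.sqrt κ
  else if κ = 0 then θ
  else Real.sinh (Real.sqrt (-κ) * θ) / Real.sqrt (-κ)

/-- The distortion coefficient `σ^{(t)}_κ(θ) = 𝔰_κ(tθ)/𝔰_κ(θ)` (equal to `t` when `κθ² = 0`). -/
noncomputable def sigmaR (κ t θ : ℝ) : ℝ :=
  if κ * θ ^ 2 = 0 then t else sK κ (t * θ) / sK κ θ

/-- The exponential entropy `U_N(μ|𝔪) = exp(−Ent(μ|𝔪)/N)`, with `U_N = 0` when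
`Ent(μ|𝔪) = +∞`. -/
noncomputable def UNent {X : Type*} [MeasurableSpace X] (μ m : Measure X) (N : ℝ) : ℝ :=
  if entropy μ m = ⊤ then 0 else Real.exp (-(entropy μ m).toReal / N)

section auxiliary
open Real

private lemma aux_sinh_deriv_ineq {s : ℝ} (hs0 : 0 ≤ s) (hs1 : s ≤ 1) {x : ℝ} (hx : 0 ≤ x) :
    s * Real.cosh (s * x) * Real.sinh x ≤ Real.sinh (s * x) * Real.cosh x := by
  have hd : ∀ y : ℝ, HasDerivAt (fun y => Real.sinh (s * y) * Real.cosh y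
      - s * (Real.cosh (s * y) * Real.sinh y)) ((1 - s ^ 2) * (Real.sinh (s * y) * Real.sinh y)) y := by
    intro y
    have h1 : HasDerivAt (fun y : ℝ => s * y) s y := by
      simpa using (hasDerivAt_id y).const_mul s
    have h2 : HasDerivAt (fun y : ℝ => Real.sinh (s * y)) (Real.cosh (s * y) * s) y := h1.sinh
    have h3 : HasDerivAt (fun y : ℝ => Real.cosh (s * y)) (Real.sinh (s * y) * s) y := h1.cosh
    have h6 := ((h2.mul (Real.hasDerivAt_cosh y)).sub
      ((h3.mul (Real.hasDerivAt_sinh y)).const_mul s))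
    exact h6.congr_deriv (by ring)
  have hmono : Monotone (fun y => Real.sinh (s * y) * Real.cosh y
      - s * (Real.cosh (s * y) * Real.sinh y)) := by
    apply monotone_of_deriv_nonneg (fun y => (hd y).differentiableAt)
    intro y
    rw [(hd y).deriv]
    have hnn : 0 ≤ Real.sinh (s * y) * Real.sinh y := by
      rcases le_total 0 y with h | h
      · exact mul_nonneg (Real.sinh_nonneg_iff.mpr (by positivity)) (Real.sinh_nonneg_iff.mpr h)
      · have h1 : Real.sinh (s * y) ≤ 0 :=
          Real.sinh_nonpos_iff.mpr (mul_nonpos_of_nonneg_of_nonpos hs0 h)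
        have h2 : Real.sinh y ≤ 0 := Real.sinh_nonpos_iff.mpr h
        nlinarith
    exact mul_nonneg (by nlinarith) hnn
  have h0 := hmono hx
  simp only [mul_zero, Real.sinh_zero, Real.cosh_zero, zero_mul, mul_one, sub_zero] at h0
  linarith [h0]

private lemma aux_sinh_le {s : ℝ} (hs0 : 0 ≤ s) (hs1 : s ≤ 1) {x : ℝ} (hx : 0 ≤ x) :
    Real.sinh (s * x) ≤ s * Real.sinh x := by
  have hd : ∀ y : ℝ, HasDerivAt (fun y => s * Real.sinh y - Real.sinh (s * y))
      (s * Real.cosh y - Real.cosh (s * y) * s) y := by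
    intro y
    have h1 : HasDerivAt (fun y : ℝ => s * y) s y := by
      simpa using (hasDerivAt_id y).const_mul s
    exact ((Real.hasDerivAt_sinh y).const_mul s).sub h1.sinh
  have hmono : Monotone (fun y => s * Real.sinh y - Real.sinh (s * y)) := by
    apply monotone_of_deriv_nonneg (fun y => (hd y).differentiableAt)
    intro y
    rw [(hd y).deriv]
    have : Real.cosh (s * y) ≤ Real.cosh y := by
      rw [Real.cosh_le_cosh, abs_mul]
      calc |s| * |y| ≤ 1 * |y| := by
            apply mul_le_mul_of_nonneg_right _ (abs_nonneg y)
            rw [abs_of_nonneg hs0]; exact hs1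
        _ = |y| := one_mul _
    nlinarith
  have h0 := hmono hx
  simp only [mul_zero, Real.sinh_zero, sub_zero] at h0
  linarith [h0]

private lemma aux_sin_deriv_ineq {s : ℝ} (hs0 : 0 ≤ s) (hs1 : s ≤ 1) {x : ℝ}
    (hx0 : 0 ≤ x) (hxpi : x ≤ π) :
    Real.sin (s * x) * Real.cos x ≤ s * Real.cos (s * x) * Real.sin x := by
  have hd : ∀ y : ℝ, HasDerivAt (fun y => s * (Real.cos (s * y) * Real.sin y)
      - Real.sin (s * y) * Real.cos y) ((1 - s ^ 2) * (Real.sin (s * y) * Real.sin y)) y := by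
    intro y
    have h1 : HasDerivAt (fun y : ℝ => s * y) s y := by
      simpa using (hasDerivAt_id y).const_mul s
    have h2 : HasDerivAt (fun y : ℝ => Real.sin (s * y)) (Real.cos (s * y) * s) y := h1.sin
    have h3 : HasDerivAt (fun y : ℝ => Real.cos (s * y)) (-Real.sin (s * y) * s) y := h1.cos
    have h6 := (((h3.mul (Real.hasDerivAt_sin y)).const_mul s).sub
      (h2.mul (Real.hasDerivAt_cos y)))
    exact h6.congr_deriv (by ring)
  have hmono : MonotoneOn (fun y => s * (Real.cos (s * y) * Real.sin y)
      - Real.sin (s * y) * Real.cos y) (Set.Icc 0 π) := by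
    apply monotoneOn_of_deriv_nonneg (convex_Icc 0 π)
    · exact fun y _ => ((hd y).differentiableAt.continuousAt.continuousWithinAt)
    · exact fun y _ => ((hd y).differentiableAt.differentiableWithinAt)
    · intro y hy
      rw [interior_Icc, Set.mem_Ioo] at hy
      rw [(hd y).deriv]
      have h1 : 0 ≤ Real.sin (s * y) :=
        Real.sin_nonneg_of_nonneg_of_le_pi (mul_nonneg hs0 hy.1.le)
          (le_trans (by nlinarith : s * y ≤ y) hy.2.le)
      have h2 : 0 ≤ Real.sin y := Real.sin_nonneg_of_nonneg_of_le_pi hy.1.le hy.2.le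
      have : (0:ℝ) ≤ 1 - s ^ 2 := by nlinarith
      positivity
  have h0 := hmono (Set.left_mem_Icc.mpr Real.pi_pos.le) (Set.mem_Icc.mpr ⟨hx0, hxpi⟩) hx0
  simp only [mul_zero, Real.sin_zero, Real.cos_zero, zero_mul, mul_one, sub_zero] at h0
  linarith [h0]

private lemma aux_sin_ge {s : ℝ} (hs0 : 0 ≤ s) (hs1 : s ≤ 1) {x : ℝ}
    (hx0 : 0 ≤ x) (hxpi : x ≤ π) :
    s * Real.sin x ≤ Real.sin (s * x) := by
  have hd : ∀ y : ℝ, HasDerivAt (fun y => Real.sin (s * y) - s * Real.sin y)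
      (Real.cos (s * y) * s - s * Real.cos y) y := by
    intro y
    have h1 : HasDerivAt (fun y : ℝ => s * y) s y := by
      simpa using (hasDerivAt_id y).const_mul s
    exact h1.sin.sub ((Real.hasDerivAt_sin y).const_mul s)
  have hmono : MonotoneOn (fun y => Real.sin (s * y) - s * Real.sin y) (Set.Icc 0 π) := by
    apply monotoneOn_of_deriv_nonneg (convex_Icc 0 π)
    · exact fun y _ => ((hd y).differentiableAt.continuousAt.continuousWithinAt)
    · exact fun y _ => ((hd y).differentiableAt.differentiableWithinAt)
    · intro y hy
      rw [interior_Icc, Set.mem_Ioo] at hy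
      rw [(hd y).deriv]
      have : Real.cos y ≤ Real.cos (s * y) :=
        Real.cos_le_cos_of_nonneg_of_le_pi (mul_nonneg hs0 hy.1.le) hy.2.le (by nlinarith)
      nlinarith
  have h0 := hmono (Set.left_mem_Icc.mpr Real.pi_pos.le) (Set.mem_Icc.mpr ⟨hx0, hxpi⟩) hx0
  simp only [mul_zero, Real.sin_zero, sub_zero] at h0
  linarith [h0]

private lemma sigmaR_neg_eq {κ : ℝ} (hκ : κ < 0) {θ : ℝ} (hθ : θ ≠ 0) (s : ℝ) :
    sigmaR κ s θ = Real.sinh (s * (Real.sqrt (-κ) * θ)) / Real.sinh (Real.sqrt (-κ) * θ) := by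
  have hr : Real.sqrt (-κ) ≠ 0 := by
    simp only [ne_eq, Real.sqrt_eq_zero']; push_neg; linarith
  rw [sigmaR, if_neg (by
    simp only [mul_eq_zero, not_or]
    exact ⟨hκ.ne, pow_ne_zero _ hθ⟩)]
  simp only [sK, if_neg (not_lt.mpr hκ.le), if_neg hκ.ne]
  rw [div_div_div_cancel_right₀, mul_left_comm]
  exact hr

private lemma sigmaR_pos_eq {κ : ℝ} (hκ : 0 < κ) {θ : ℝ} (hθ : θ ≠ 0) (s : ℝ) :
    sigmaR κ s θ = Real.sin (s * (Real.sqrt κ * θ)) / Real.sin (Real.sqrt κ * θ) := by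
  have hr : Real.sqrt κ ≠ 0 := by positivity
  rw [sigmaR, if_neg (by
    simp only [mul_eq_zero, not_or]
    exact ⟨hκ.ne', pow_ne_zero _ hθ⟩)]
  simp only [sK, if_pos hκ]
  rw [div_div_div_cancel_right₀, mul_left_comm]
  exact hr

private lemma sinh_ratio_anti {s : ℝ} (hs0 : 0 ≤ s) (hs1 : s ≤ 1) {a b : ℝ}
    (ha : 0 < a) (hab : a ≤ b) :
    Real.sinh (s * b) / Real.sinh b ≤ Real.sinh (s * a) / Real.sinh a := by
  have hd : ∀ y : ℝ, 0 < y → HasDerivAt (fun y => Real.sinh (s * y) / Real.sinh y)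
      ((Real.cosh (s * y) * s * Real.sinh y - Real.sinh (s * y) * Real.cosh y)
        / (Real.sinh y) ^ 2) y := by
    intro y hy
    have h1 : HasDerivAt (fun y : ℝ => s * y) s y := by
      simpa using (hasDerivAt_id y).const_mul s
    exact (h1.sinh).div (Real.hasDerivAt_sinh y) (Real.sinh_ne_zero.mpr hy.ne')
  have key : AntitoneOn (fun y => Real.sinh (s * y) / Real.sinh y) (Set.Icc a b) := by
    apply antitoneOn_of_deriv_nonpos (convex_Icc a b)
    · intro y hy
      exact ((hd y (lt_of_lt_of_le ha hy.1)).differentiableAt.continuousAt.continuousWithinAt)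
    · intro y hy
      rw [interior_Icc] at hy
      exact ((hd y (lt_of_lt_of_le ha hy.1.le)).differentiableAt.differentiableWithinAt)
    · intro y hy
      rw [interior_Icc] at hy
      have hy0 : 0 < y := lt_of_lt_of_le ha hy.1.le
      rw [(hd y hy0).deriv]
      apply div_nonpos_iff.mpr
      refine Or.inr ⟨?_, sq_nonneg _⟩
      have := aux_sinh_deriv_ineq hs0 hs1 hy0.le
      nlinarith
  exact key (Set.mem_Icc.mpr ⟨le_refl a, hab⟩) (Set.mem_Icc.mpr ⟨hab, le_refl b⟩) hab

private lemma sin_ratio_mono {s : ℝ} (hs0 : 0 ≤ s) (hs1 : s ≤ 1) {a b : ℝ}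
    (ha : 0 < a) (hab : a ≤ b) (hb : b < π) :
    Real.sin (s * a) / Real.sin a ≤ Real.sin (s * b) / Real.sin b := by
  have hd : ∀ y : ℝ, 0 < y → y < π → HasDerivAt (fun y => Real.sin (s * y) / Real.sin y)
      ((Real.cos (s * y) * s * Real.sin y - Real.sin (s * y) * Real.cos y)
        / (Real.sin y) ^ 2) y := by
    intro y hy hy'
    have h1 : HasDerivAt (fun y : ℝ => s * y) s y := by
      simpa using (hasDerivAt_id y).const_mul s
    exact (h1.sin).div (Real.hasDerivAt_sin y)
      (ne_of_gt (Real.sin_pos_of_pos_of_lt_pi hy hy'))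
  have key : MonotoneOn (fun y => Real.sin (s * y) / Real.sin y) (Set.Icc a b) := by
    apply monotoneOn_of_deriv_nonneg (convex_Icc a b)
    · intro y hy
      exact ((hd y (lt_of_lt_of_le ha hy.1)
        (lt_of_le_of_lt hy.2 hb)).differentiableAt.continuousAt.continuousWithinAt)
    · intro y hy
      rw [interior_Icc] at hy
      exact ((hd y (lt_of_lt_of_le ha hy.1.le)
        (lt_of_le_of_lt hy.2.le hb)).differentiableAt.differentiableWithinAt)
    · intro y hy
      rw [interior_Icc] at hy
      have hy0 : 0 < y := lt_of_lt_of_le ha hy.1.le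
      have hyπ : y < π := lt_of_le_of_lt hy.2.le hb
      rw [(hd y hy0 hyπ).deriv]
      apply div_nonneg _ (sq_nonneg _)
      have := aux_sin_deriv_ineq hs0 hs1 hy0.le hyπ.le
      nlinarith
  exact key (Set.mem_Icc.mpr ⟨le_refl a, hab⟩) (Set.mem_Icc.mpr ⟨hab, le_refl b⟩) hab

private lemma sigmaR_anti {κ : ℝ} (hκ : κ < 0) {s θ₁ θ₂ : ℝ} (hs0 : 0 ≤ s) (hs1 : s ≤ 1)
    (h1 : 0 ≤ θ₁) (h12 : θ₁ ≤ θ₂) : sigmaR κ s θ₂ ≤ sigmaR κ s θ₁ := by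
  have hr : 0 < Real.sqrt (-κ) := Real.sqrt_pos.mpr (by linarith)
  rcases eq_or_lt_of_le (h1.trans h12) with h2z | h2pos
  · have h1z : θ₁ = 0 := le_antisymm (h12.trans h2z.symm.le) h1
    simp [sigmaR, ← h2z, h1z]
  rcases eq_or_lt_of_le h1 with h1z | h1pos
  · have e1 : sigmaR κ s θ₁ = s := by simp [sigmaR, ← h1z]
    rw [e1, sigmaR_neg_eq hκ h2pos.ne' s]
    have ha : 0 < Real.sqrt (-κ) * θ₂ := by positivity
    rw [div_le_iff₀ (Real.sinh_pos_iff.mpr ha)]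
    exact aux_sinh_le hs0 hs1 ha.le
  · rw [sigmaR_neg_eq hκ h1pos.ne' s, sigmaR_neg_eq hκ (lt_of_lt_of_le h1pos h12).ne' s]
    exact sinh_ratio_anti hs0 hs1 (by positivity) (by nlinarith)

private lemma sigmaR_mono {κ : ℝ} (hκ : 0 < κ) {s θ₁ θ₂ : ℝ} (hs0 : 0 ≤ s) (hs1 : s ≤ 1)
    (h1 : 0 ≤ θ₁) (h12 : θ₁ ≤ θ₂) (hdom : Real.sqrt κ * θ₂ < π) :
    sigmaR κ s θ₁ ≤ sigmaR κ s θ₂ := by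
  have hr : 0 < Real.sqrt κ := Real.sqrt_pos.mpr hκ
  rcases eq_or_lt_of_le (h1.trans h12) with h2z | h2pos
  · have h1z : θ₁ = 0 := le_antisymm (h12.trans h2z.symm.le) h1
    simp [sigmaR, ← h2z, h1z]
  rcases eq_or_lt_of_le h1 with h1z | h1pos
  · have e1 : sigmaR κ s θ₁ = s := by simp [sigmaR, ← h1z]
    rw [e1, sigmaR_pos_eq hκ h2pos.ne' s]
    have ha : 0 < Real.sqrt κ * θ₂ := by positivity
    rw [le_div_iff₀ (Real.sin_pos_of_pos_of_lt_pi ha hdom)]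
    exact aux_sin_ge hs0 hs1 ha.le hdom.le
  · rw [sigmaR_pos_eq hκ h1pos.ne' s, sigmaR_pos_eq hκ (lt_of_lt_of_le h1pos h12).ne' s]
    exact sin_ratio_mono hs0 hs1 (by positivity) (by nlinarith) hdom

end auxiliary

private lemma UNent_le {X : Type*} [MeasurableSpace X] (m : Measure X) (N : ℝ) (hN : 1 ≤ N)
    (μt : Measure X) [IsProbabilityMeasure μt] (hac : μt ≪ m)
    (At : Set X) (hAt : MeasurableSet At) (hconc : μt Atᶜ = 0)
    (hpos : 0 < m At) (hfin : m At < ⊤) :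
    UNent μt m N ≤ (m At).toReal ^ (1 / N) := by
  have hNpos : (0:ℝ) < N := by linarith
  have hc : 0 < (m At).toReal := ENNReal.toReal_pos hpos.ne' hfin.ne
  rw [UNent]
  split_ifs with htop
  · exact Real.rpow_nonneg ENNReal.toReal_nonneg _
  have hcond : μt ≪ m ∧ Integrable
      (fun x => max ((μt.rnDeriv m x).toReal * Real.log (μt.rnDeriv m x).toReal) 0) m := by
    by_contra hcn
    exact htop (by simp only [entropy, if_neg hcn])
  have hent : entropy μt m
      = (((∫ x, (μt.rnDeriv m x).toReal * Real.log (μt.rnDeriv m x).toReal ∂m) : ℝ) : EReal) := by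
    simp only [entropy, if_pos hcond]
  -- Lebesgue decomposition of μt w.r.t. m
  haveI hfinR : IsFiniteMeasure (m.restrict At) :=
    ⟨by simpa [Measure.restrict_apply_univ] using hfin⟩
  haveI : μt.HaveLebesgueDecomposition (m.restrict At) :=
    Measure.haveLebesgueDecomposition_of_finiteMeasure
  have hacR : μt ≪ m.restrict At := by
    apply Measure.AbsolutelyContinuous.mk
    intro E hE hzero
    rw [Measure.restrict_apply hE] at hzero
    have h1 : μt (E ∩ At) = 0 := hac hzero
    have h2 : μt (E ∩ Atᶜ) = 0 :=
      measure_mono_null (Set.inter_subset_right) hconc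
    have : μt E ≤ μt (E ∩ At) + μt (E ∩ Atᶜ) := by
      conv_lhs => rw [← Set.inter_union_compl E At]
      exact measure_union_le _ _
    simpa [h1, h2] using this
  haveI hLD : μt.HaveLebesgueDecomposition m := by
    constructor
    refine ⟨(0, At.indicator (μt.rnDeriv (m.restrict At))), ?_, ?_, ?_⟩
    · exact (Measure.measurable_rnDeriv _ _).indicator hAt
    · exact Measure.MutuallySingular.zero_left
    · rw [zero_add, withDensity_indicator hAt, Measure.withDensity_rnDeriv_eq _ _ hacR]
  -- basic facts
  have hmeasρ : Measurable (fun x => (μt.rnDeriv m x).toReal) :=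
    (Measure.measurable_rnDeriv μt m).ennreal_toReal
  have hμtAt : μt At = 1 := (prob_compl_eq_zero_iff hAt).mp hconc
  have hset : ∫ x in At, (μt.rnDeriv m x).toReal ∂m = 1 := by
    rw [Measure.setIntegral_toReal_rnDeriv' hac hAt, measureReal_def, hμtAt, ENNReal.toReal_one]
  have hρ0 : ∀ᵐ x ∂m, x ∈ Atᶜ → μt.rnDeriv m x = 0 := by
    have h1 : ∫⁻ x in Atᶜ, μt.rnDeriv m x ∂m = 0 := by
      rw [Measure.setLIntegral_rnDeriv' hac hAt.compl, hconc]
    have h2 := (lintegral_eq_zero_iff (Measure.measurable_rnDeriv μt m)).mp h1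
    rw [Filter.EventuallyEq, ae_restrict_iff' hAt.compl] at h2
    filter_upwards [h2] with x hx hm using hx hm
  have hf0 : ∀ᵐ x ∂m, x ∈ Atᶜ →
      (μt.rnDeriv m x).toReal * Real.log (μt.rnDeriv m x).toReal = 0 := by
    filter_upwards [hρ0] with x hx hmem
    rw [hx hmem]; simp
  have hflb : ∀ x, -1 ≤ (μt.rnDeriv m x).toReal * Real.log (μt.rnDeriv m x).toReal := by
    intro x
    set r := (μt.rnDeriv m x).toReal with hr
    have h0 : 0 ≤ r := ENNReal.toReal_nonneg
    rcases eq_or_lt_of_le h0 with hz | hp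
    · simp [← hz]
    · have hlog : Real.log r⁻¹ ≤ r⁻¹ - 1 := Real.log_le_sub_one_of_pos (by positivity)
      rw [Real.log_inv] at hlog
      have h2 : r * (-Real.log r) ≤ r * (r⁻¹ - 1) := mul_le_mul_of_nonneg_left hlog h0
      have h3 : r * r⁻¹ = 1 := mul_inv_cancel₀ hp.ne'
      nlinarith
  have hfmeas : Measurable (fun x => (μt.rnDeriv m x).toReal * Real.log (μt.rnDeriv m x).toReal) :=
    hmeasρ.mul (Real.measurable_log.comp hmeasρ)
  have hneg_int : Integrable
      (fun x => max (-((μt.rnDeriv m x).toReal * Real.log (μt.rnDeriv m x).toReal)) 0) m := by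
    apply Integrable.mono' ((integrable_indicator_iff hAt).mpr
      (integrableOn_const (C := (1:ℝ)) hfin.ne))
      ((hfmeas.neg.max measurable_const).aestronglyMeasurable)
    filter_upwards [hf0] with x hx
    simp only [Pi.neg_apply]
    by_cases hxA : x ∈ At
    · rw [Real.norm_eq_abs, abs_of_nonneg (le_max_right _ _), Set.indicator_of_mem hxA]
      exact max_le (by linarith [hflb x]) zero_le_one
    · rw [hx hxA]
      simp [Set.indicator_of_notMem hxA]
  have hf_int : Integrable
      (fun x => (μt.rnDeriv m x).toReal * Real.log (μt.rnDeriv m x).toReal) m := by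
    have heq : (fun x => (μt.rnDeriv m x).toReal * Real.log (μt.rnDeriv m x).toReal)
        = fun x => max ((μt.rnDeriv m x).toReal * Real.log (μt.rnDeriv m x).toReal) 0
          - max (-((μt.rnDeriv m x).toReal * Real.log (μt.rnDeriv m x).toReal)) 0 := by
      funext x
      rcases le_total 0 ((μt.rnDeriv m x).toReal * Real.log (μt.rnDeriv m x).toReal) with h | h
      · rw [max_eq_left h, max_eq_right (neg_nonpos.mpr h), sub_zero]
      · rw [max_eq_right h, max_eq_left (neg_nonneg.mpr h), zero_sub, neg_neg]
    rw [heq]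
    exact hcond.2.sub hneg_int
  -- Jensen
  haveI : NeZero (m.restrict At) := ⟨by
    rw [ne_eq, Measure.restrict_eq_zero]; exact hpos.ne'⟩
  have hρint : Integrable (fun x => (μt.rnDeriv m x).toReal) (m.restrict At) :=
    (Measure.integrable_toReal_rnDeriv).restrict
  have hgint : Integrable ((fun y => y * Real.log y) ∘ (fun x => (μt.rnDeriv m x).toReal))
      (m.restrict At) := hf_int.restrict
  have jense := (Real.convexOn_mul_log).map_average_le Real.continuous_mul_log.continuousOn
      isClosed_Ici (Filter.Eventually.of_forall (fun x => Set.mem_Ici.mpr ENNReal.toReal_nonneg))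
      hρint hgint
  have havg : ⨍ x, (μt.rnDeriv m x).toReal ∂(m.restrict At) = ((m At).toReal)⁻¹ := by
    rw [average_eq, measureReal_def, Measure.restrict_apply_univ, hset]
    simp
  have havg2 : ⨍ x, (μt.rnDeriv m x).toReal * Real.log ((μt.rnDeriv m x).toReal) ∂(m.restrict At)
      = ((m At).toReal)⁻¹
        * ∫ x in At, (μt.rnDeriv m x).toReal * Real.log ((μt.rnDeriv m x).toReal) ∂m := by
    rw [average_eq, measureReal_def, Measure.restrict_apply_univ, smul_eq_mul]
  rw [havg, havg2] at jense
  have hIAt : -Real.log (m At).toReal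
      ≤ ∫ x in At, (μt.rnDeriv m x).toReal * Real.log ((μt.rnDeriv m x).toReal) ∂m := by
    have h2 := mul_le_mul_of_nonneg_left jense hc.le
    rw [Real.log_inv] at h2
    have h3 : (m At).toReal * ((m At).toReal)⁻¹ = 1 := mul_inv_cancel₀ hc.ne'
    nlinarith
  have hI : -Real.log (m At).toReal
      ≤ ∫ x, (μt.rnDeriv m x).toReal * Real.log ((μt.rnDeriv m x).toReal) ∂m := by
    have hsplit := integral_add_compl hAt hf_int
    have hzero : ∫ x in Atᶜ,
        (μt.rnDeriv m x).toReal * Real.log ((μt.rnDeriv m x).toReal) ∂m = 0 := by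
      apply integral_eq_zero_of_ae
      rw [Filter.EventuallyEq, ae_restrict_iff' hAt.compl]
      filter_upwards [hf0] with x hx hm
      simpa using hx hm
    rw [← hsplit, hzero, add_zero]
    exact hIAt
  rw [hent]
  simp only [EReal.toReal_coe]
  rw [Real.rpow_def_of_pos hc, mul_one_div]
  apply Real.exp_le_exp.mpr
  rw [div_le_div_iff₀ hNpos hNpos]
  nlinarith

/-- The entropic convexity inequality implies the timelike Brunn–Minkowski inequality: if
`μ_t` is a probability measure absolutely continuous w.r.t. `𝔪`, concentrated on `A_t`, and
`U_N(μ_t|𝔪) ≥ σ^{(1−t)}_{K/N}(T)·𝔪(A₀)^{1/N} + σ^{(t)}_{K/N}(T)·𝔪(A₁)^{1/N}` with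
`T = ‖τ‖_{L²(π)}` for a coupling `π` of the normalized restrictions, then
`𝔪(A_t)^{1/N} ≥ σ^{(1−t)}_{K/N}(Θ)·𝔪(A₀)^{1/N} + σ^{(t)}_{K/N}(Θ)·𝔪(A₁)^{1/N}`, with
`Θ` the sup (if `K < 0`) resp. inf (if `K ≥ 0`) of `τ` between `A₀` and `A₁`. -/
theorem stmt_13 {X : Type*} [MeasurableSpace X]
    (τ : X → X → ℝ) (hτnn : ∀ x y, 0 ≤ τ x y)
    (hτm : Measurable fun q : X × X => τ q.1 q.2)
    (m : Measure X) (K N : ℝ) (hN : 1 ≤ N)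
    (A₀ A₁ : Set X) (hA₀ : MeasurableSet A₀) (hA₁ : MeasurableSet A₁)
    (h₀ : 0 < m A₀) (h₀' : m A₀ < ⊤) (h₁ : 0 < m A₁) (h₁' : m A₁ < ⊤)
    (hbdd : BddAbove {r : ℝ | ∃ x ∈ A₀, ∃ y ∈ A₁, τ x y = r})
    (π : Measure (X × X)) [IsProbabilityMeasure π]
    (hπ₀ : π.map Prod.fst = (m A₀)⁻¹ • m.restrict A₀)
    (hπ₁ : π.map Prod.snd = (m A₁)⁻¹ • m.restrict A₁)
    (T : ℝ) (hT : T = (∫ q, τ q.1 q.2 ^ 2 ∂π) ^ ((1 : ℝ) / 2))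
    (Θ : ℝ)
    (hΘ : Θ = if K < 0 then sSup {r : ℝ | ∃ x ∈ A₀, ∃ y ∈ A₁, τ x y = r}
              else sInf {r : ℝ | ∃ x ∈ A₀, ∃ y ∈ A₁, τ x y = r})
    (hdom : 0 < K → K / N * T ^ 2 < Real.pi ^ 2)
    (t : ℝ) (ht : t ∈ Set.Icc (0 : ℝ) 1)
    (μt : Measure X) [IsProbabilityMeasure μt] (hac : μt ≪ m)
    (At : Set X) (hAt : MeasurableSet At) (hconc : μt Atᶜ = 0)
    (hyp : sigmaR (K / N) (1 - t) T * (m A₀).toReal ^ (1 / N)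
            + sigmaR (K / N) t T * (m A₁).toReal ^ (1 / N) ≤ UNent μt m N) :
    ENNReal.ofReal
        (sigmaR (K / N) (1 - t) Θ * (m A₀).toReal ^ (1 / N)
          + sigmaR (K / N) t Θ * (m A₁).toReal ^ (1 / N))
      ≤ m At ^ (1 / N) := by
  have hNpos : (0:ℝ) < N := by linarith
  have h1N : (0:ℝ) < 1 / N := by positivity
  rcases eq_top_or_lt_top (m At) with htop | hfin
  · rw [htop, ENNReal.top_rpow_of_pos h1N]; exact le_top
  have hAtpos : 0 < m At := by
    rcases eq_zero_or_pos (m At) with hz | h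
    · exfalso
      have h1 : μt At = 0 := hac hz
      have h2 : μt Set.univ ≤ μt At + μt Atᶜ := by
        conv_lhs => rw [← Set.union_compl_self At]
        exact measure_union_le _ _
      rw [measure_univ, h1, hconc, add_zero] at h2
      simp at h2
    · exact h
  -- Facts about the set of τ-values
  have hA₀ne : A₀.Nonempty := nonempty_of_measure_ne_zero h₀.ne'
  have hA₁ne : A₁.Nonempty := nonempty_of_measure_ne_zero h₁.ne'
  obtain ⟨x₀, hx₀⟩ := hA₀ne
  obtain ⟨y₀, hy₀⟩ := hA₁ne
  have hSne : {r : ℝ | ∃ x ∈ A₀, ∃ y ∈ A₁, τ x y = r}.Nonempty :=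
    ⟨τ x₀ y₀, x₀, hx₀, y₀, hy₀, rfl⟩
  have hSnn : ∀ r ∈ {r : ℝ | ∃ x ∈ A₀, ∃ y ∈ A₁, τ x y = r}, (0:ℝ) ≤ r := by
    rintro r ⟨x, hx, y, hy, rfl⟩; exact hτnn x y
  have hSbb : BddBelow {r : ℝ | ∃ x ∈ A₀, ∃ y ∈ A₁, τ x y = r} :=
    ⟨0, fun r hr => hSnn r hr⟩
  -- π is concentrated on A₀ ×ˢ A₁
  have hπmem : ∀ᵐ q ∂π, q ∈ A₀ ×ˢ A₁ := by
    have e1 : π (Prod.fst ⁻¹' A₀ᶜ) = 0 := by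
      have e : π.map Prod.fst A₀ᶜ = 0 := by
        rw [hπ₀]
        simp [Measure.restrict_apply hA₀.compl, Set.compl_inter_self]
      rwa [Measure.map_apply measurable_fst hA₀.compl] at e
    have e2 : π (Prod.snd ⁻¹' A₁ᶜ) = 0 := by
      have e : π.map Prod.snd A₁ᶜ = 0 := by
        rw [hπ₁]
        simp [Measure.restrict_apply hA₁.compl, Set.compl_inter_self]
      rwa [Measure.map_apply measurable_snd hA₁.compl] at e
    rw [ae_iff]
    apply measure_mono_null _ (measure_union_null e1 e2)
    intro q hq
    simp only [Set.mem_setOf_eq, Set.mem_prod, not_and] at hq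
    by_cases hq1 : q.1 ∈ A₀
    · exact Or.inr (hq hq1)
    · exact Or.inl hq1
  have hTnn : 0 ≤ T := by
    rw [hT]
    exact Real.rpow_nonneg (integral_nonneg fun q => sq_nonneg _) _
  have h0t : (0:ℝ) ≤ t := ht.1
  have ht1 : t ≤ 1 := ht.2
  have hrnn₀ : (0:ℝ) ≤ (m A₀).toReal ^ (1 / N) := Real.rpow_nonneg ENNReal.toReal_nonneg _
  have hrnn₁ : (0:ℝ) ≤ (m A₁).toReal ^ (1 / N) := Real.rpow_nonneg ENNReal.toReal_nonneg _
  -- the σ-comparison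
  have hσ : sigmaR (K/N) (1-t) Θ * (m A₀).toReal ^ (1/N)
        + sigmaR (K/N) t Θ * (m A₁).toReal ^ (1/N)
      ≤ sigmaR (K/N) (1-t) T * (m A₀).toReal ^ (1/N)
        + sigmaR (K/N) t T * (m A₁).toReal ^ (1/N) := by
    rcases lt_trichotomy K 0 with hK | hK | hK
    · -- K < 0 : Θ is the sup, T ≤ Θ, σ is non-increasing
      have hκ : K / N < 0 := div_neg_of_neg_of_pos hK hNpos
      have hΘM : Θ = sSup {r : ℝ | ∃ x ∈ A₀, ∃ y ∈ A₁, τ x y = r} := by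
        rw [hΘ, if_pos hK]
      have hΘnn : 0 ≤ Θ := by
        rw [hΘM]
        exact le_trans (hτnn x₀ y₀) (le_csSup hbdd ⟨x₀, hx₀, y₀, hy₀, rfl⟩)
      have hae_le : ∀ᵐ q ∂π, τ q.1 q.2 ≤ Θ := by
        filter_upwards [hπmem] with q hq
        rw [hΘM]
        exact le_csSup hbdd ⟨q.1, hq.1, q.2, hq.2, rfl⟩
      have hτ2int : Integrable (fun q => τ q.1 q.2 ^ 2) π := by
        apply Integrable.mono' (integrable_const (Θ ^ 2))
          ((hτm.pow_const 2).aestronglyMeasurable)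
        filter_upwards [hae_le] with q hq
        rw [Real.norm_eq_abs, abs_of_nonneg (sq_nonneg _)]
        have := hτnn q.1 q.2
        nlinarith
      have hTM : T ≤ Θ := by
        rw [hT]
        have h2 : ∫ q, τ q.1 q.2 ^ 2 ∂π ≤ Θ ^ 2 := by
          have := integral_mono_ae hτ2int (integrable_const (Θ ^ 2))
            (by filter_upwards [hae_le] with q hq
                have h0 := hτnn q.1 q.2
                show τ q.1 q.2 ^ 2 ≤ Θ ^ 2
                nlinarith)
          simpa using this
        calc (∫ q, τ q.1 q.2 ^ 2 ∂π) ^ ((1:ℝ)/2) ≤ (Θ ^ 2) ^ ((1:ℝ)/2) :=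
              Real.rpow_le_rpow (integral_nonneg fun q => sq_nonneg _) h2 (by norm_num)
          _ = Θ := by rw [← Real.sqrt_eq_rpow, Real.sqrt_sq hΘnn]
      exact add_le_add
        (mul_le_mul_of_nonneg_right
          (sigmaR_anti hκ (by linarith) (by linarith) hTnn hTM) hrnn₀)
        (mul_le_mul_of_nonneg_right (sigmaR_anti hκ h0t ht1 hTnn hTM) hrnn₁)
    · -- K = 0
      have hκ0 : K / N = 0 := by rw [hK, zero_div]
      simp [sigmaR, hκ0]
    · -- K > 0 : Θ is the inf, Θ ≤ T, σ is non-decreasing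
      have hκ : 0 < K / N := div_pos hK hNpos
      have hΘI : Θ = sInf {r : ℝ | ∃ x ∈ A₀, ∃ y ∈ A₁, τ x y = r} := by
        rw [hΘ, if_neg (not_lt.mpr hK.le)]
      have hΘnn : 0 ≤ Θ := by
        rw [hΘI]; exact le_csInf hSne hSnn
      have hae_ge : ∀ᵐ q ∂π, Θ ≤ τ q.1 q.2 := by
        filter_upwards [hπmem] with q hq
        rw [hΘI]
        exact csInf_le hSbb ⟨q.1, hq.1, q.2, hq.2, rfl⟩
      have hae_le : ∀ᵐ q ∂π, τ q.1 q.2 ≤ sSup {r : ℝ | ∃ x ∈ A₀, ∃ y ∈ A₁, τ x y = r} := by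
        filter_upwards [hπmem] with q hq
        exact le_csSup hbdd ⟨q.1, hq.1, q.2, hq.2, rfl⟩
      have hτ2int : Integrable (fun q => τ q.1 q.2 ^ 2) π := by
        apply Integrable.mono'
          (integrable_const ((sSup {r : ℝ | ∃ x ∈ A₀, ∃ y ∈ A₁, τ x y = r}) ^ 2))
          ((hτm.pow_const 2).aestronglyMeasurable)
        filter_upwards [hae_le] with q hq
        rw [Real.norm_eq_abs, abs_of_nonneg (sq_nonneg _)]
        have := hτnn q.1 q.2
        nlinarith
      have hΘT : Θ ≤ T := by
        rw [hT]
        have h2 : Θ ^ 2 ≤ ∫ q, τ q.1 q.2 ^ 2 ∂π := by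
          have := integral_mono_ae (integrable_const (Θ ^ 2)) hτ2int
            (by filter_upwards [hae_ge] with q hq
                have := hτnn q.1 q.2
                nlinarith)
          simpa using this
        calc Θ = (Θ ^ 2) ^ ((1:ℝ)/2) := by rw [← Real.sqrt_eq_rpow, Real.sqrt_sq hΘnn]
          _ ≤ (∫ q, τ q.1 q.2 ^ 2 ∂π) ^ ((1:ℝ)/2) :=
              Real.rpow_le_rpow (by positivity) h2 (by norm_num)
      have hdomT : Real.sqrt (K/N) * T < Real.pi := by
        have h := hdom hK
        have he : Real.sqrt (K/N) * T = Real.sqrt (K/N * T^2) := by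
          rw [Real.sqrt_mul hκ.le, Real.sqrt_sq hTnn]
        rw [he]
        calc Real.sqrt (K/N*T^2) < Real.sqrt (Real.pi^2) :=
              Real.sqrt_lt_sqrt (by positivity) h
          _ = Real.pi := Real.sqrt_sq Real.pi_pos.le
      exact add_le_add
        (mul_le_mul_of_nonneg_right
          (sigmaR_mono hκ (by linarith) (by linarith) hΘnn hΘT hdomT) hrnn₀)
        (mul_le_mul_of_nonneg_right (sigmaR_mono hκ h0t ht1 hΘnn hΘT hdomT) hrnn₁)
  -- conclude
  have hkey := le_trans hσ (le_trans hyp (UNent_le m N hN μt hac At hAt hconc hAtpos hfin))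
  calc ENNReal.ofReal
        (sigmaR (K / N) (1 - t) Θ * (m A₀).toReal ^ (1 / N)
          + sigmaR (K / N) t Θ * (m A₁).toReal ^ (1 / N))
      ≤ ENNReal.ofReal ((m At).toReal ^ (1 / N)) := ENNReal.ofReal_le_ofReal hkey
    _ = m At ^ (1 / N) := by
        rw [ENNReal.toReal_rpow, ENNReal.ofReal_toReal
          (ENNReal.rpow_ne_top_of_nonneg h1N.le hfin.ne)]
end

section
/- For fixed K ∈ ℝ, θ ≥ 0 and t ∈ [0,1], the function N ↦ −N log(σ^{(t)}_{K/N}(θ)) is non-decreasing in N on (0,∞) (where defined). Consequently, the timelike measure contraction property TMCP^e_p(K,N) implies TMCP^e_p(K',N') for all K' ≤ K and N' ≥ N. -/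
open MeasureTheory Classical

/-- A causal coupling of `μ` and `ν`. -/
def CausalCoupling {X : Type*} [MeasurableSpace X] (le : X → X → Prop)
    (μ ν : Measure X) (π : Measure (X × X)) : Prop :=
  IsProbabilityMeasure π ∧ π.map Prod.fst = μ ∧ π.map Prod.snd = ν ∧
    π {q : X × X | le q.1 q.2} = 1

/-- The `p`-Lorentz–Wasserstein functional, with value `⊥` when no causal coupling exists. -/
noncomputable def ellp {X : Type*} [MeasurableSpace X] (le : X → X → Prop) (τ : X → X → ℝ)
    (p : ℝ) (μ ν : Measure X) : EReal :=
  sSup ((fun π : Measure (X × X) =>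
    (((∫ q, τ q.1 q.2 ^ p ∂π) ^ (1 / p) : ℝ) : EReal)) '' {π | CausalCoupling le μ ν π})

/-- The extended distortion coefficient, equal to `+∞` when `κθ² ≥ π²` (with `κθ² > 0`). -/
noncomputable def sigmaE (κ t θ : ℝ) : EReal :=
  if 0 < κ * θ ^ 2 ∧ Real.pi ^ 2 ≤ κ * θ ^ 2 then ⊤ else ((sigmaR κ t θ : ℝ) : EReal)

/-- An `ℓ_p`-geodesic of probability measures:
`ℓ_p(μ_s, μ_t) = (t − s) ℓ_p(μ_0, μ_1) ∈ (0,∞)` for all `0 ≤ s < t ≤ 1`. -/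
def IsLpGeodesic {X : Type*} [MeasurableSpace X] (le : X → X → Prop) (τ : X → X → ℝ)
    (p : ℝ) (μ : ℝ → Measure X) : Prop :=
  0 < ellp le τ p (μ 0) (μ 1) ∧ ellp le τ p (μ 0) (μ 1) < ⊤ ∧
  ∀ s t : ℝ, 0 ≤ s → s < t → t ≤ 1 →
    ellp le τ p (μ s) (μ t) = ((t - s : ℝ) : EReal) * ellp le τ p (μ 0) (μ 1)

/-- The timelike measure contraction property `TMCP^e_p(K,N)`: for every compactly supported
probability measure `μ₀` with finite entropy and every point `x₁` with `x ≪ x₁` for `μ₀`-a.e.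
`x`, there is an `ℓ_p`-geodesic from `μ₀` to `δ_{x₁}` along which
`U_N(μ_t|𝔪) ≥ σ^{(1−t)}_{K/N}(‖τ(·,x₁)‖_{L²(μ₀)}) U_N(μ₀|𝔪)` for `t ∈ [0,1)`. -/
def TMCP {X : Type*} [MeasurableSpace X] [TopologicalSpace X] (le chron : X → X → Prop)
    (τ : X → X → ℝ) (m : Measure X) (p K N : ℝ) : Prop :=
  ∀ μ₀ : Measure X, IsProbabilityMeasure μ₀ →
    (∃ Kc : Set X, IsCompact Kc ∧ μ₀ Kcᶜ = 0) →
    entropy μ₀ m ≠ ⊤ →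
    ∀ x₁ : X, (∀ᵐ x ∂μ₀, chron x x₁) →
    ∃ μ : ℝ → Measure X, μ 0 = μ₀ ∧ μ 1 = Measure.dirac x₁ ∧
      IsLpGeodesic le τ p μ ∧
      ∀ t ∈ Set.Ico (0 : ℝ) 1,
        sigmaE (K / N) (1 - t) ((∫ x, τ x x₁ ^ 2 ∂μ₀) ^ ((1 : ℝ) / 2)) *
            ((UNent μ₀ m N : ℝ) : EReal)
          ≤ ((UNent (μ t) m N : ℝ) : EReal)

section AuxSturm

open Filter Finset Real Topology

noncomputable def sig (t u : ℝ) : ℝ :=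
  if 0 < u then Real.sin (t * Real.sqrt u) / Real.sin (Real.sqrt u)
  else if u = 0 then t
  else Real.sinh (t * Real.sqrt (-u)) / Real.sinh (Real.sqrt (-u))

lemma aux_pos {t x : ℝ} (ht0 : 0 ≤ t) (ht1 : t ≤ 1) (hx : x < 1) :
    0 < 1 - t ^ 2 * x := by nlinarith [sq_nonneg t, mul_nonneg (mul_nonneg ht0 ht0) (sub_pos.2 hx).le]

lemma aux_mono {t x y : ℝ} (ht0 : 0 ≤ t) (ht1 : t ≤ 1) (hxy : x ≤ y) (hy : y < 1) :
    (1 - t ^ 2 * x) / (1 - x) ≤ (1 - t ^ 2 * y) / (1 - y) := by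
  have hx : x < 1 := lt_of_le_of_lt hxy hy
  rw [div_le_div_iff₀ (by linarith) (by linarith)]
  nlinarith [mul_nonneg (sub_nonneg.2 hxy) (sub_nonneg.2 (by nlinarith : t ^ 2 ≤ 1))]

lemma aux_sturm {t x α : ℝ} (ht0 : 0 < t) (ht1 : t ≤ 1) (hα0 : 0 ≤ α) (hα1 : α ≤ 1)
    (hx : x < 1) :
    (1 - t ^ 2 * (α * x)) / (1 - α * x) ≤ ((1 - t ^ 2 * x) / (1 - x)) ^ α := by
  have hαx : α * x < 1 := by
    rcases le_or_gt x 0 with h | h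
    · nlinarith [mul_nonneg hα0 (neg_nonneg.2 h)]
    · nlinarith [mul_le_mul_of_nonneg_right hα1 h.le]
  have h1 : (0:ℝ) < 1 - x := by linarith
  have h2 : (0:ℝ) < 1 - t ^ 2 * x := aux_pos ht0.le ht1 hx
  have h3 : (0:ℝ) < 1 - α * x := by linarith
  have h4 : (0:ℝ) < 1 - t ^ 2 * (α * x) := aux_pos ht0.le ht1 hαx
  set A : ℝ := (1 - t ^ 2 * x) / (1 - x) with hA
  have hApos : 0 < A := div_pos h2 h1
  have hAinv : A⁻¹ = (1 - x) / (1 - t ^ 2 * x) := by rw [hA, inv_div]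
  have hAinvpos : 0 < A⁻¹ := inv_pos.2 hApos
  have hbern : (A⁻¹) ^ α ≤ 1 + α * (A⁻¹ - 1) := by
    have := rpow_one_add_le_one_add_mul_self (s := A⁻¹ - 1) (by linarith) hα0 hα1
    simpa using this
  have hD : (A ^ α)⁻¹ ≤ 1 + α * (A⁻¹ - 1) := by
    rwa [← Real.inv_rpow hApos.le]
  have hDpos : 0 < 1 + α * (A⁻¹ - 1) :=
    lt_of_lt_of_le (inv_pos.2 (Real.rpow_pos_of_pos hApos α)) hD
  have h5 : (1 + α * (A⁻¹ - 1))⁻¹ ≤ A ^ α := by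
    have := inv_anti₀ (inv_pos.2 (Real.rpow_pos_of_pos hApos α)) hD
    rwa [inv_inv] at this
  refine le_trans ?_ h5
  rw [inv_eq_one_div, div_le_div_iff₀ h3 hDpos, one_mul, hAinv]
  have he : 1 + α * ((1 - x) / (1 - t ^ 2 * x) - 1) =
      ((1 - t ^ 2 * x) - α * x * (1 - t ^ 2)) / (1 - t ^ 2 * x) := by
    rw [eq_div_iff h2.ne']
    have hq : (1 - x) / (1 - t ^ 2 * x) * (1 - t ^ 2 * x) = 1 - x := div_mul_cancel₀ _ h2.ne'
    linear_combination α * hq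
  rw [he, ← mul_div_assoc, div_le_iff₀ h2]
  nlinarith [mul_nonneg (mul_nonneg (mul_nonneg hα0 (sub_nonneg.2 hα1)) (sq_nonneg (t*x))) (sub_nonneg.2 (by nlinarith : t^2 ≤ 1))]

lemma tendsto_euler_sinh_prod (y : ℝ) :
    Tendsto (fun n : ℕ => π * y * ∏ j ∈ Finset.range n, ((1 : ℝ) + y ^ 2 / ((j : ℝ) + 1) ^ 2))
      atTop (𝓝 (Real.sinh (π * y))) := by
  have h := Complex.tendsto_euler_sin_prod ((y : ℂ) * Complex.I)
  have key : ∀ n : ℕ,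
      (π : ℂ) * ((y : ℂ) * Complex.I) *
          ∏ j ∈ Finset.range n, ((1 : ℂ) - ((y : ℂ) * Complex.I) ^ 2 / ((j : ℂ) + 1) ^ 2) =
        ((π * y * ∏ j ∈ Finset.range n, ((1 : ℝ) + y ^ 2 / ((j : ℝ) + 1) ^ 2) : ℝ) : ℂ) *
          Complex.I := by
    intro n
    have hterm : ∀ j : ℕ, ((1 : ℂ) - ((y : ℂ) * Complex.I) ^ 2 / ((j : ℂ) + 1) ^ 2) =
        (((1 : ℝ) + y ^ 2 / ((j : ℝ) + 1) ^ 2 : ℝ) : ℂ) := by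
      intro j
      rw [mul_pow, Complex.I_sq]
      push_cast
      ring
    rw [Finset.prod_congr rfl fun j _ => hterm j, ← Complex.ofReal_prod]
    push_cast
    ring
  have hsin : Complex.sin ((π : ℂ) * ((y : ℂ) * Complex.I)) =
      ((Real.sinh (π * y) : ℝ) : ℂ) * Complex.I := by
    have e : (π : ℂ) * ((y : ℂ) * Complex.I) = ((π * y : ℝ) : ℂ) * Complex.I := by
      push_cast; ring
    rw [e, Complex.sin_mul_I, Complex.ofReal_sinh]
  rw [funext key, hsin] at h
  have him := (Complex.continuous_im.tendsto _).comp h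
  simp only [Function.comp_def, Complex.mul_I_im, Complex.ofReal_re] at him
  exact him

lemma term_lt_one {u : ℝ} (hu : u < π ^ 2) (j : ℕ) : u / (π ^ 2 * ((j : ℝ) + 1) ^ 2) < 1 := by
  have hj : (1 : ℝ) ≤ ((j : ℝ) + 1) ^ 2 := by
    have hj0 : (0 : ℝ) ≤ (j : ℝ) := Nat.cast_nonneg j
    nlinarith
  have hπ : (0 : ℝ) < π ^ 2 := by positivity
  have hd : (0 : ℝ) < π ^ 2 * ((j : ℝ) + 1) ^ 2 := by positivity
  rw [div_lt_one hd]
  rcases le_or_gt u 0 with h | h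
  · nlinarith
  · nlinarith

/-- The partial products converging to `sig t u`. -/
noncomputable def QQ (t u : ℝ) (n : ℕ) : ℝ :=
  t * ∏ j ∈ Finset.range n,
    ((1 - t ^ 2 * (u / (π ^ 2 * ((j : ℝ) + 1) ^ 2))) / (1 - u / (π ^ 2 * ((j : ℝ) + 1) ^ 2)))

lemma tendsto_QQ {t u : ℝ} (hu : u < π ^ 2) : Tendsto (QQ t u) atTop (𝓝 (sig t u)) := by
  have hπ : (π : ℝ) ≠ 0 := Real.pi_ne_zero
  rcases lt_trichotomy u 0 with hu0 | hu0 | hu0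
  · set s : ℝ := Real.sqrt (-u) with hs
    have hspos : 0 < s := Real.sqrt_pos.2 (by linarith)
    have hs2 : s ^ 2 = -u := Real.sq_sqrt (by linarith)
    have hsig : sig t u = Real.sinh (t * s) / Real.sinh s := by
      simp only [sig]; rw [if_neg (by linarith), if_neg (by linarith)]
    have hnum := tendsto_euler_sinh_prod (t * s / π)
    have hden := tendsto_euler_sinh_prod (s / π)
    have hc1 : π * (t * s / π) = t * s := by field_simp
    have hc2 : π * (s / π) = s := by field_simp
    have e1 : ∀ n, π * (t * s / π) * ∏ j ∈ Finset.range n, ((1:ℝ) + (t * s / π) ^ 2 / ((j:ℝ)+1) ^ 2)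
        = t * s * ∏ j ∈ Finset.range n, (1 - t ^ 2 * (u / (π ^ 2 * ((j : ℝ) + 1) ^ 2))) := by
      intro n
      rw [hc1]
      refine congrArg _ (Finset.prod_congr rfl fun j _ => ?_)
      have hj : ((j:ℝ)+1) ≠ 0 := by positivity
      rw [div_pow, mul_pow, hs2]
      field_simp
      ring
    have e2 : ∀ n, π * (s / π) * ∏ j ∈ Finset.range n, ((1:ℝ) + (s / π) ^ 2 / ((j:ℝ)+1) ^ 2)
        = s * ∏ j ∈ Finset.range n, (1 - u / (π ^ 2 * ((j : ℝ) + 1) ^ 2)) := by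
      intro n
      rw [hc2]
      refine congrArg _ (Finset.prod_congr rfl fun j _ => ?_)
      have hj : ((j:ℝ)+1) ≠ 0 := by positivity
      rw [div_pow, hs2]
      field_simp
      ring
    rw [funext e1, hc1] at hnum
    rw [funext e2, hc2] at hden
    have hden0 : Real.sinh s ≠ 0 := ne_of_gt (by rwa [Real.sinh_pos_iff])
    have hdiv := hnum.div hden hden0
    rw [hsig]
    refine hdiv.congr fun n => ?_
    show t * s * _ / (s * _) = QQ t u n
    rw [QQ, Finset.prod_div_distrib, ← mul_div_assoc,
      show t * s * (∏ j ∈ Finset.range n, (1 - t ^ 2 * (u / (π ^ 2 * ((j : ℝ) + 1) ^ 2))))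
        = s * (t * ∏ j ∈ Finset.range n, (1 - t ^ 2 * (u / (π ^ 2 * ((j : ℝ) + 1) ^ 2)))) from by ring,
      mul_div_mul_left _ _ (ne_of_gt hspos)]
  · subst hu0
    have hq : QQ t 0 = fun _ : ℕ => t := by
      funext n; rw [QQ]; simp
    have hsig : sig t 0 = t := by simp [sig]
    rw [hq, hsig]
    exact tendsto_const_nhds
  · set s : ℝ := Real.sqrt u with hs
    have hspos : 0 < s := Real.sqrt_pos.2 hu0
    have hs2 : s ^ 2 = u := Real.sq_sqrt hu0.le
    have hslt : s < π := by
      nlinarith [Real.pi_pos]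
    have hsig : sig t u = Real.sin (t * s) / Real.sin s := by
      simp only [sig]; rw [if_pos hu0]
    have hnum := Real.tendsto_euler_sin_prod (t * s / π)
    have hden := Real.tendsto_euler_sin_prod (s / π)
    have hc1 : π * (t * s / π) = t * s := by field_simp
    have hc2 : π * (s / π) = s := by field_simp
    have e1 : ∀ n, π * (t * s / π) * ∏ j ∈ Finset.range n, ((1:ℝ) - (t * s / π) ^ 2 / ((j:ℝ)+1) ^ 2)
        = t * s * ∏ j ∈ Finset.range n, (1 - t ^ 2 * (u / (π ^ 2 * ((j : ℝ) + 1) ^ 2))) := by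
      intro n
      rw [hc1]
      refine congrArg _ (Finset.prod_congr rfl fun j _ => ?_)
      have hj : ((j:ℝ)+1) ≠ 0 := by positivity
      rw [div_pow, mul_pow, hs2]
      field_simp
    have e2 : ∀ n, π * (s / π) * ∏ j ∈ Finset.range n, ((1:ℝ) - (s / π) ^ 2 / ((j:ℝ)+1) ^ 2)
        = s * ∏ j ∈ Finset.range n, (1 - u / (π ^ 2 * ((j : ℝ) + 1) ^ 2)) := by
      intro n
      rw [hc2]
      refine congrArg _ (Finset.prod_congr rfl fun j _ => ?_)
      have hj : ((j:ℝ)+1) ≠ 0 := by positivity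
      rw [div_pow, hs2]
      field_simp
    rw [funext e1, hc1] at hnum
    rw [funext e2, hc2] at hden
    have hden0 : Real.sin s ≠ 0 := ne_of_gt (Real.sin_pos_of_pos_of_lt_pi hspos hslt)
    have hdiv := hnum.div hden hden0
    rw [hsig]
    refine hdiv.congr fun n => ?_
    show t * s * _ / (s * _) = QQ t u n
    rw [QQ, Finset.prod_div_distrib, ← mul_div_assoc,
      show t * s * (∏ j ∈ Finset.range n, (1 - t ^ 2 * (u / (π ^ 2 * ((j : ℝ) + 1) ^ 2))))
        = s * (t * ∏ j ∈ Finset.range n, (1 - t ^ 2 * (u / (π ^ 2 * ((j : ℝ) + 1) ^ 2)))) from by ring,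
      mul_div_mul_left _ _ (ne_of_gt hspos)]

lemma QQ_factor_pos {t u : ℝ} (ht0 : 0 ≤ t) (ht1 : t ≤ 1) (hu : u < π ^ 2) (j : ℕ) :
    0 < (1 - t ^ 2 * (u / (π ^ 2 * ((j : ℝ) + 1) ^ 2))) / (1 - u / (π ^ 2 * ((j : ℝ) + 1) ^ 2)) :=
  div_pos (aux_pos ht0 ht1 (term_lt_one hu j))
    (sub_pos.2 (term_lt_one hu j))

lemma sig_pos {t u : ℝ} (ht0 : 0 < t) (ht1 : t ≤ 1) (hu : u < π ^ 2) : 0 < sig t u := by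
  rcases lt_trichotomy u 0 with hu0 | hu0 | hu0
  · have hspos : 0 < Real.sqrt (-u) := Real.sqrt_pos.2 (by linarith)
    have h1 : 0 < Real.sinh (t * Real.sqrt (-u)) := by
      rw [Real.sinh_pos_iff]; positivity
    have h2 : 0 < Real.sinh (Real.sqrt (-u)) := by rw [Real.sinh_pos_iff]; exact hspos
    simp only [sig]
    rw [if_neg (by linarith), if_neg (by linarith)]
    exact div_pos h1 h2
  · subst hu0; simpa [sig] using ht0
  · have hspos : 0 < Real.sqrt u := Real.sqrt_pos.2 hu0
    have hs2 : Real.sqrt u ^ 2 = u := Real.sq_sqrt hu0.le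
    have hslt : Real.sqrt u < π := by nlinarith [Real.pi_pos]
    have h1 : 0 < Real.sin (t * Real.sqrt u) :=
      Real.sin_pos_of_pos_of_lt_pi (by positivity)
        (lt_of_le_of_lt (by nlinarith : t * Real.sqrt u ≤ Real.sqrt u) hslt)
    have h2 : 0 < Real.sin (Real.sqrt u) := Real.sin_pos_of_pos_of_lt_pi hspos hslt
    simp only [sig]
    rw [if_pos hu0]
    exact div_pos h1 h2

lemma sig_mono {t u u' : ℝ} (ht0 : 0 ≤ t) (ht1 : t ≤ 1) (huu' : u ≤ u') (hu' : u' < π ^ 2) :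
    sig t u ≤ sig t u' := by
  have hu : u < π ^ 2 := lt_of_le_of_lt huu' hu'
  refine le_of_tendsto_of_tendsto' (tendsto_QQ hu) (tendsto_QQ hu') fun n => ?_
  refine mul_le_mul_of_nonneg_left (Finset.prod_le_prod
    (fun j _ => (QQ_factor_pos ht0 ht1 hu j).le) (fun j _ => ?_)) ht0
  have hd : (0:ℝ) < π ^ 2 * ((j : ℝ) + 1) ^ 2 := by positivity
  have h1 : u / (π ^ 2 * ((j : ℝ) + 1) ^ 2) ≤ u' / (π ^ 2 * ((j : ℝ) + 1) ^ 2) := by gcongr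
  exact aux_mono ht0 ht1 h1 (term_lt_one hu' j)

lemma sig_sturm {t u α : ℝ} (ht0 : 0 < t) (ht1 : t ≤ 1) (hα0 : 0 < α) (hα1 : α ≤ 1)
    (hu : u < π ^ 2) : sig t (α * u) ≤ t ^ (1 - α) * sig t u ^ α := by
  have hαu : α * u < π ^ 2 := by
    rcases le_or_gt u 0 with h | h
    · nlinarith [Real.pi_pos]
    · nlinarith
  refine le_of_tendsto_of_tendsto' (tendsto_QQ hαu)
    (((tendsto_QQ hu).rpow_const (Or.inr hα0.le)).const_mul _) fun n => ?_
  have hprod0 : (0:ℝ) ≤ ∏ j ∈ Finset.range n,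
      ((1 - t ^ 2 * (u / (π ^ 2 * ((j : ℝ) + 1) ^ 2))) / (1 - u / (π ^ 2 * ((j : ℝ) + 1) ^ 2))) :=
    Finset.prod_nonneg fun j _ => (QQ_factor_pos ht0.le ht1 hu j).le
  rw [QQ, QQ, Real.mul_rpow ht0.le hprod0, ← mul_assoc, ← Real.rpow_add ht0,
    sub_add_cancel, Real.rpow_one, ← Real.finset_prod_rpow _ _
      (fun j _ => (QQ_factor_pos ht0.le ht1 hu j).le)]
  refine mul_le_mul_of_nonneg_left (Finset.prod_le_prod
    (fun j _ => (QQ_factor_pos ht0.le ht1 hαu j).le) (fun j _ => ?_)) ht0.le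
  have he : α * u / (π ^ 2 * ((j : ℝ) + 1) ^ 2) = α * (u / (π ^ 2 * ((j : ℝ) + 1) ^ 2)) := by
    ring
  rw [he]
  exact aux_sturm ht0 ht1 hα0.le hα1 (term_lt_one hu j)

lemma sigmaR_eq_sig {κ t θ : ℝ} (hθ : 0 < θ) : sigmaR κ t θ = sig t (κ * θ ^ 2) := by
  rcases lt_trichotomy κ 0 with hκ | hκ | hκ
  · have h1 : κ * θ ^ 2 < 0 := mul_neg_of_neg_of_pos hκ (pow_pos hθ 2)
    have hc : 0 < Real.sqrt (-κ) := Real.sqrt_pos.2 (by linarith)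
    have ha : Real.sqrt (-(κ * θ ^ 2)) = Real.sqrt (-κ) * θ := by
      rw [show -(κ * θ ^ 2) = (-κ) * θ ^ 2 by ring, Real.sqrt_mul (by linarith) (θ ^ 2),
        Real.sqrt_sq hθ.le]
    rw [sigmaR, if_neg h1.ne]
    simp only [sK, sig]
    simp only [if_neg (not_lt.2 hκ.le), if_neg hκ.ne, if_neg (not_lt.2 h1.le), if_neg h1.ne]
    rw [ha, show Real.sqrt (-κ) * (t * θ) = t * (Real.sqrt (-κ) * θ) by ring,
      div_div_div_comm, div_self hc.ne', div_one]
  · subst hκ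
    simp [sigmaR, sig]
  · have h1 : 0 < κ * θ ^ 2 := by positivity
    have hc : 0 < Real.sqrt κ := Real.sqrt_pos.2 hκ
    have ha : Real.sqrt (κ * θ ^ 2) = Real.sqrt κ * θ := by
      rw [Real.sqrt_mul hκ.le (θ ^ 2), Real.sqrt_sq hθ.le]
    rw [sigmaR, if_neg h1.ne']
    simp only [sK, sig]
    simp only [if_pos hκ, if_pos h1]
    rw [ha, show Real.sqrt κ * (t * θ) = t * (Real.sqrt κ * θ) by ring,
      div_div_div_comm, div_self hc.ne', div_one]

lemma sigmaR_pos {κ t θ : ℝ} (ht0 : 0 < t) (ht1 : t ≤ 1) (hθ : 0 ≤ θ)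
    (h : 0 < κ → κ * θ ^ 2 < π ^ 2) : 0 < sigmaR κ t θ := by
  rcases eq_or_lt_of_le hθ with h0 | h0
  · rw [sigmaR, if_pos (by rw [← h0]; ring)]; exact ht0
  · rw [sigmaR_eq_sig h0]
    refine sig_pos ht0 ht1 ?_
    rcases le_or_gt κ 0 with hk | hk
    · nlinarith [Real.pi_pos, sq_nonneg θ]
    · exact h hk

lemma sigmaR_zero (κ θ : ℝ) : sigmaR κ 0 θ = 0 := by
  rw [sigmaR]
  split_ifs with h
  · rfl
  · have h2 : sK κ (0 * θ) = 0 := by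
      rw [zero_mul]
      simp only [sK]
      split_ifs <;> simp
    rw [h2, zero_div]

lemma keyIneq {K K' N N' t θ : ℝ} (hN : 0 < N) (hNN' : N ≤ N') (hK' : K' ≤ K)
    (ht0 : 0 < t) (ht1 : t ≤ 1) (hθ : 0 ≤ θ) (hKN : 0 < K → K / N * θ ^ 2 < π ^ 2) :
    N' * Real.log (sigmaR (K' / N') t θ) ≤ N * Real.log (sigmaR (K / N) t θ) := by
  have hN' : 0 < N' := lt_of_lt_of_le hN hNN'
  have hlogt : Real.log t ≤ 0 := Real.log_nonpos ht0.le ht1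
  rcases eq_or_lt_of_le hθ with h0 | h0
  · have e : ∀ κ : ℝ, sigmaR κ t θ = t := fun κ => by
      rw [sigmaR, if_pos (by rw [← h0]; ring)]
    rw [e, e]; nlinarith
  · have hu1 : K / N * θ ^ 2 < π ^ 2 := by
      rcases le_or_gt K 0 with hK | hK
      · have h2 : K / N ≤ 0 := div_nonpos_of_nonpos_of_nonneg hK hN.le
        nlinarith [Real.pi_pos, sq_nonneg θ]
      · exact hKN hK
    have hKN' : K / N' * θ ^ 2 < π ^ 2 := by
      rcases le_or_gt K 0 with hK | hK
      · have h2 : K / N' ≤ 0 := div_nonpos_of_nonpos_of_nonneg hK hN'.le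
        nlinarith [Real.pi_pos, sq_nonneg θ]
      · have h2 : K / N' ≤ K / N := div_le_div_of_nonneg_left hK.le hN hNN'
        nlinarith [sq_nonneg θ]
    have hK'N' : K' / N' * θ ^ 2 ≤ K / N' * θ ^ 2 := by
      have h2 : K' / N' ≤ K / N' := by gcongr
      nlinarith [sq_nonneg θ]
    have hs1 : sigmaR (K' / N') t θ ≤ sigmaR (K / N') t θ := by
      rw [sigmaR_eq_sig h0, sigmaR_eq_sig h0]
      exact sig_mono ht0.le ht1 hK'N' hKN'
    have hp1 : 0 < sigmaR (K' / N') t θ := by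
      rw [sigmaR_eq_sig h0]; exact sig_pos ht0 ht1 (lt_of_le_of_lt hK'N' hKN')
    have hp2 : 0 < sigmaR (K / N') t θ := by
      rw [sigmaR_eq_sig h0]; exact sig_pos ht0 ht1 hKN'
    have hp3 : 0 < sigmaR (K / N) t θ := by
      rw [sigmaR_eq_sig h0]; exact sig_pos ht0 ht1 hu1
    have hl1 : Real.log (sigmaR (K' / N') t θ) ≤ Real.log (sigmaR (K / N') t θ) :=
      Real.log_le_log hp1 hs1
    set α := N / N' with hα
    have hα0 : 0 < α := div_pos hN hN'
    have hα1 : α ≤ 1 := (div_le_one hN').2 hNN'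
    have hαu : α * (K / N * θ ^ 2) = K / N' * θ ^ 2 := by
      rw [hα]
      field_simp [hN.ne', hN'.ne']
    have hst : sig t (K / N' * θ ^ 2) ≤ t ^ (1 - α) * sig t (K / N * θ ^ 2) ^ α := by
      rw [← hαu]; exact sig_sturm ht0 ht1 hα0 hα1 hu1
    have hsigpos : 0 < sig t (K / N * θ ^ 2) := by rw [← sigmaR_eq_sig h0]; exact hp3
    have hl2 : Real.log (sigmaR (K / N') t θ) ≤
        (1 - α) * Real.log t + α * Real.log (sigmaR (K / N) t θ) := by
      rw [sigmaR_eq_sig h0, sigmaR_eq_sig h0]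
      calc Real.log (sig t (K / N' * θ ^ 2))
          ≤ Real.log (t ^ (1 - α) * sig t (K / N * θ ^ 2) ^ α) :=
            Real.log_le_log (by rw [← sigmaR_eq_sig h0]; exact hp2) hst
        _ = (1 - α) * Real.log t + α * Real.log (sig t (K / N * θ ^ 2)) := by
            rw [Real.log_mul (Real.rpow_pos_of_pos ht0 _).ne' (Real.rpow_pos_of_pos hsigpos _).ne',
              Real.log_rpow ht0, Real.log_rpow hsigpos]
    have hNα : N' * α = N := by
      rw [hα, mul_comm, div_mul_cancel₀ _ hN'.ne']
    have hexp : N' * ((1 - α) * Real.log t + α * Real.log (sigmaR (K / N) t θ))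
        = N' * (1 - α) * Real.log t + N * Real.log (sigmaR (K / N) t θ) := by
      rw [← hNα]; ring
    have hneg : N' * (1 - α) * Real.log t ≤ 0 :=
      mul_nonpos_of_nonneg_of_nonpos (mul_nonneg hN'.le (sub_nonneg.2 hα1)) hlogt
    calc N' * Real.log (sigmaR (K' / N') t θ)
        ≤ N' * Real.log (sigmaR (K / N') t θ) := mul_le_mul_of_nonneg_left hl1 hN'.le
      _ ≤ N' * ((1 - α) * Real.log t + α * Real.log (sigmaR (K / N) t θ)) :=
          mul_le_mul_of_nonneg_left hl2 hN'.le
      _ ≤ N * Real.log (sigmaR (K / N) t θ) := by rw [hexp]; linarith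

end AuxSturm

/-- (i) For fixed `K, θ` and `t ∈ [0,1]`, the map `N ↦ −N log(σ^{(t)}_{K/N}(θ))` is
non-decreasing in `N` (where defined); (ii) consequently `TMCP^e_p(K,N)` implies
`TMCP^e_p(K',N')` for all `K' ≤ K` and `N' ≥ N`. -/
theorem stmt_15 {X : Type*} [MeasurableSpace X] [TopologicalSpace X]
    (le chron : X → X → Prop) (τ : X → X → ℝ) (m : Measure X) (p : ℝ)
    (hp : p ∈ Set.Ioo (0 : ℝ) 1) :
    (∀ K θ t N₁ N₂ : ℝ, 0 < N₁ → N₁ ≤ N₂ → 0 ≤ θ → t ∈ Set.Icc (0 : ℝ) 1 →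
      (0 < K → K / N₁ * θ ^ 2 < Real.pi ^ 2) →
      -N₁ * Real.log (sigmaR (K / N₁) t θ) ≤ -N₂ * Real.log (sigmaR (K / N₂) t θ)) ∧
    (∀ K N K' N' : ℝ, 0 < N → K' ≤ K → N ≤ N' →
      TMCP le chron τ m p K N → TMCP le chron τ m p K' N') := by
  constructor
  · -- Part (i)
    intro K θ t N₁ N₂ hN₁ hN₁₂ hθ ht hKθ
    rcases eq_or_lt_of_le ht.1 with h0 | h0
    · rw [← h0, sigmaR_zero, sigmaR_zero, Real.log_zero, mul_zero, mul_zero]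
    · have := keyIneq hN₁ hN₁₂ (le_refl K) h0 ht.2 hθ hKθ
      linarith
  · -- Part (ii)
    intro K N K' N' hN hK' hNN' hT
    intro μ₀ hprob hcomp hent x₁ hae
    obtain ⟨μ, hμ0, hμ1, hgeo, hbound⟩ := hT μ₀ hprob hcomp hent x₁ hae
    refine ⟨μ, hμ0, hμ1, hgeo, ?_⟩
    have hN' : 0 < N' := lt_of_lt_of_le hN hNN'
    set θ : ℝ := (∫ x, τ x x₁ ^ 2 ∂μ₀) ^ ((1 : ℝ) / 2) with hθdef
    have hθ0 : 0 ≤ θ := Real.rpow_nonneg (integral_nonneg fun x => sq_nonneg _) _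
    have hU0N : UNent μ₀ m N = Real.exp (-(entropy μ₀ m).toReal / N) := by
      rw [UNent, if_neg hent]
    have hU0N' : UNent μ₀ m N' = Real.exp (-(entropy μ₀ m).toReal / N') := by
      rw [UNent, if_neg hent]
    by_cases hc : 0 < K / N * θ ^ 2 ∧ Real.pi ^ 2 ≤ K / N * θ ^ 2
    · exfalso
      have hb := hbound 0 ⟨le_refl 0, zero_lt_one⟩
      rw [sigmaE, if_pos hc, hμ0, hU0N, EReal.top_mul_coe_of_pos (Real.exp_pos _)] at hb
      exact EReal.coe_ne_top _ (top_le_iff.1 hb)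
    · have hlt : 0 < K / N * θ ^ 2 → K / N * θ ^ 2 < Real.pi ^ 2 := by
        intro h
        by_contra hge
        exact hc ⟨h, not_lt.1 hge⟩
      have hKcond : 0 < K → K / N * θ ^ 2 < Real.pi ^ 2 := by
        intro hK
        rcases eq_or_lt_of_le hθ0 with he | he
        · rw [← he]
          norm_num
          positivity
        · exact hlt (mul_pos (div_pos hK hN) (pow_pos he 2))
      have hKNdivcond : 0 < K / N → K / N * θ ^ 2 < Real.pi ^ 2 := by
        intro h
        rcases eq_or_lt_of_le hθ0 with he | he
        · rw [← he]
          norm_num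
          positivity
        · exact hlt (mul_pos h (pow_pos he 2))
      have hK'full : 0 < K' / N' → K' / N' * θ ^ 2 < Real.pi ^ 2 := by
        intro h
        have hK'0 : 0 < K' := by
          rcases div_pos_iff.1 h with ⟨ha, _⟩ | ⟨_, hb⟩
          · exact ha
          · linarith
        have hK0 : 0 < K := lt_of_lt_of_le hK'0 hK'
        rcases eq_or_lt_of_le hθ0 with he | he
        · rw [← he]
          norm_num
          positivity
        · have hθ2 : 0 < θ ^ 2 := pow_pos he 2
          have c1 : K' / N' ≤ K / N' := by gcongr
          have c2 : K / N' ≤ K / N := div_le_div_of_nonneg_left hK0.le hN hNN'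
          have c3 : K / N * θ ^ 2 < Real.pi ^ 2 := hKcond hK0
          nlinarith [mul_le_mul_of_nonneg_right (c1.trans c2) hθ2.le]
      intro t ht
      obtain ⟨ht0, ht1⟩ := ht
      have h1t0 : 0 < 1 - t := by linarith
      have h1t1 : 1 - t ≤ 1 := by linarith
      have hb := hbound t ⟨ht0, ht1⟩
      have hσpos : 0 < sigmaR (K / N) (1 - t) θ :=
        sigmaR_pos h1t0 h1t1 hθ0 hKNdivcond
      rw [sigmaE, if_neg hc, hU0N] at hb
      have hEt : entropy (μ t) m ≠ ⊤ := by
        intro hTop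
        have hz : UNent (μ t) m N = 0 := by rw [UNent, if_pos hTop]
        rw [hz, ← EReal.coe_mul] at hb
        have hle := EReal.coe_le_coe_iff.1 hb
        nlinarith [Real.exp_pos (-(entropy μ₀ m).toReal / N), hσpos,
          mul_pos hσpos (Real.exp_pos (-(entropy μ₀ m).toReal / N))]
      have hUtN : UNent (μ t) m N = Real.exp (-(entropy (μ t) m).toReal / N) := by
        rw [UNent, if_neg hEt]
      have hUtN' : UNent (μ t) m N' = Real.exp (-(entropy (μ t) m).toReal / N') := by
        rw [UNent, if_neg hEt]
      set E₀ : ℝ := (entropy μ₀ m).toReal with hE₀def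
      set Et : ℝ := (entropy (μ t) m).toReal with hEtdef
      rw [hUtN, ← EReal.coe_mul] at hb
      have hreal : sigmaR (K / N) (1 - t) θ * Real.exp (-E₀ / N) ≤ Real.exp (-Et / N) :=
        EReal.coe_le_coe_iff.1 hb
      have hlog : Real.log (sigmaR (K / N) (1 - t) θ) + -E₀ / N ≤ -Et / N := by
        have h2 := Real.log_le_log (mul_pos hσpos (Real.exp_pos _)) hreal
        rwa [Real.log_mul hσpos.ne' (Real.exp_pos _).ne', Real.log_exp, Real.log_exp] at h2
      have hNlog : N * Real.log (sigmaR (K / N) (1 - t) θ) ≤ E₀ - Et := by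
        have h2 : Real.log (sigmaR (K / N) (1 - t) θ) ≤ (E₀ - Et) / N := by
          have e1 : -E₀ / N = -(E₀ / N) := by ring
          have e2 : -Et / N = -(Et / N) := by ring
          have e3 : (E₀ - Et) / N = E₀ / N - Et / N := by ring
          linarith
        calc N * Real.log (sigmaR (K / N) (1 - t) θ) ≤ N * ((E₀ - Et) / N) :=
              mul_le_mul_of_nonneg_left h2 hN.le
          _ = E₀ - Et := by field_simp
      have hkey := keyIneq hN hNN' hK' h1t0 h1t1 hθ0 hKcond
      have hN'log : N' * Real.log (sigmaR (K' / N') (1 - t) θ) ≤ E₀ - Et :=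
        le_trans hkey hNlog
      have hσ'pos : 0 < sigmaR (K' / N') (1 - t) θ := sigmaR_pos h1t0 h1t1 hθ0 hK'full
      have hgoal : sigmaR (K' / N') (1 - t) θ * Real.exp (-E₀ / N') ≤ Real.exp (-Et / N') := by
        have h3 : Real.log (sigmaR (K' / N') (1 - t) θ) ≤ (E₀ - Et) / N' := by
          rw [le_div_iff₀ hN']
          linarith
        have h4 : sigmaR (K' / N') (1 - t) θ ≤ Real.exp ((E₀ - Et) / N') := by
          rw [← Real.exp_log hσ'pos]
          exact Real.exp_le_exp.2 h3
        calc sigmaR (K' / N') (1 - t) θ * Real.exp (-E₀ / N')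
            ≤ Real.exp ((E₀ - Et) / N') * Real.exp (-E₀ / N') :=
              mul_le_mul_of_nonneg_right h4 (Real.exp_pos _).le
          _ = Real.exp (-Et / N') := by
              rw [← Real.exp_add]
              congr 1
              ring
      have hσ'E : sigmaE (K' / N') (1 - t) θ
          = ((sigmaR (K' / N') (1 - t) θ : ℝ) : EReal) := by
        rw [sigmaE, if_neg ?_]
        rintro ⟨hpos, hge⟩
        have hθ2 : 0 < θ ^ 2 := by
          rcases eq_or_lt_of_le hθ0 with he | he
          · rw [← he] at hpos
            norm_num at hpos
          · exact pow_pos he 2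
        have hdiv : 0 < K' / N' := by
          rcases mul_pos_iff.1 hpos with ⟨ha, _⟩ | ⟨_, hb⟩
          · exact ha
          · linarith
        exact absurd (hK'full hdiv) (not_lt.2 hge)
      rw [hσ'E, hU0N', hUtN', ← EReal.coe_mul]
      exact EReal.coe_le_coe_iff.2 hgoal
end

section
/- Let h : [0,D] → (0,∞) be an MCP(K,N) density with N > 1, i.e. h(s) ≥ (𝔰_{K/(N−1)}(b−s)/𝔰_{K/(N−1)}(b−a))^{N−1} h(a) for all 0 ≤ a ≤ s ≤ b ≤ D, and suppose h additionally satisfies the backward bound h(r) ≥ (𝔰_{K/(N−1)}(r)/𝔰_{K/(N−1)}(R))^{N−1} h(R) for all 0 ≤ r ≤ R ≤ D ∧ π√((N−1)/(K∨0)). Then the measure H(r) := ∫₀^r h(t)dt satisfies the Bishop–Gromov monotonicity H(r)/H(R) ≥ (∫₀^r 𝔰_{K/(N−1)}(t)^{N−1} dt)/(∫₀^R 𝔰_{K/(N−1)}(t)^{N−1} dt) for all 0 ≤ r ≤ R ≤ D ∧ π√((N−1)/(K∨0)). -/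
open MeasureTheory Classical

lemma sK_cont (κ : ℝ) : Continuous (sK κ) := by
  unfold sK
  split_ifs with h1 h2
  · exact (Real.continuous_sin.comp (continuous_const.mul continuous_id)).div_const _
  · exact continuous_id
  · exact (Real.continuous_sinh.comp (continuous_const.mul continuous_id)).div_const _

lemma sK_nonneg {κ θ : ℝ} (hθ : 0 ≤ θ) (hb : 0 < κ → Real.sqrt κ * θ ≤ Real.pi) :
    0 ≤ sK κ θ := by
  unfold sK
  split_ifs with h1 h2
  · exact div_nonneg (Real.sin_nonneg_of_nonneg_of_le_pi
      (mul_nonneg (Real.sqrt_nonneg _) hθ) (hb h1)) (Real.sqrt_nonneg _)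
  · exact hθ
  · exact div_nonneg (Real.sinh_nonneg_iff.2 (mul_nonneg (Real.sqrt_nonneg _) hθ))
      (Real.sqrt_nonneg _)

lemma sK_pos {κ θ : ℝ} (hθ : 0 < θ) (hb : 0 < κ → Real.sqrt κ * θ < Real.pi) :
    0 < sK κ θ := by
  unfold sK
  split_ifs with h1 h2
  · exact div_pos (Real.sin_pos_of_pos_of_lt_pi
      (mul_pos (Real.sqrt_pos.2 h1) hθ) (hb h1)) (Real.sqrt_pos.2 h1)
  · exact hθ
  · have hκ : 0 < -κ := by
      push_neg at h1
      rcases lt_or_eq_of_le h1 with hh | hh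
      · linarith
      · exact absurd hh h2
    exact div_pos (Real.sinh_pos_iff.2 (mul_pos (Real.sqrt_pos.2 hκ) hθ)) (Real.sqrt_pos.2 hκ)


/-- Bishop–Gromov monotonicity for an `MCP(K,N)` density `h` on `[0,D]` with `N > 1`: if `h`
satisfies the backward comparison bound `h(r) ≥ (𝔰_{K/(N−1)}(r)/𝔰_{K/(N−1)}(R))^{N−1} h(R)`,
then `H(r)/H(R) ≥ (∫₀^r 𝔰^{N−1})/(∫₀^R 𝔰^{N−1})` for `0 ≤ r ≤ R ≤ D ∧ π√((N−1)/(K ∨ 0))`. -/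
theorem stmt_16 (K N D : ℝ) (hN : 1 < N) (hD : 0 ≤ D) (h : ℝ → ℝ)
    (hcont : ContinuousOn h (Set.Icc 0 D))
    (hpos : ∀ s ∈ Set.Icc (0 : ℝ) D, 0 < h s)
    (hMCP : ∀ a s b : ℝ, 0 ≤ a → a ≤ s → s ≤ b → b ≤ D →
      (sK (K / (N - 1)) (b - s) / sK (K / (N - 1)) (b - a)) ^ (N - 1) * h a ≤ h s)
    (hback : ∀ r R : ℝ, 0 ≤ r → r ≤ R → R ≤ D →
      (0 < K → R ≤ Real.pi * Real.sqrt ((N - 1) / K)) →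
      (sK (K / (N - 1)) r / sK (K / (N - 1)) R) ^ (N - 1) * h R ≤ h r) :
    ∀ r R : ℝ, 0 ≤ r → r ≤ R → R ≤ D →
      (0 < K → R ≤ Real.pi * Real.sqrt ((N - 1) / K)) →
      (∫ s in (0 : ℝ)..r, sK (K / (N - 1)) s ^ (N - 1)) /
          (∫ s in (0 : ℝ)..R, sK (K / (N - 1)) s ^ (N - 1)) ≤
        (∫ s in (0 : ℝ)..r, h s) / (∫ s in (0 : ℝ)..R, h s) := by
  intro r R hr0 hrR hRD hRb
  have hN1 : (0:ℝ) < N - 1 := by linarith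
  set κ := K / (N - 1) with hκdef
  set g : ℝ → ℝ := fun s => sK κ s ^ (N - 1) with hgdef
  rcases eq_or_lt_of_le hr0 with hr | hr
  · simp [← hr]
  -- transfer of the angle bound
  have hsqrt : 0 < K → Real.sqrt κ * (Real.pi * Real.sqrt ((N - 1) / K)) = Real.pi := by
    intro hK
    have h1 : Real.sqrt κ * Real.sqrt ((N - 1) / K) = 1 := by
      rw [← Real.sqrt_mul (le_of_lt (div_pos hK hN1))]
      rw [show κ * ((N - 1) / K) = 1 by rw [hκdef]; field_simp]
      exact Real.sqrt_one
    calc Real.sqrt κ * (Real.pi * Real.sqrt ((N - 1) / K))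
        = Real.pi * (Real.sqrt κ * Real.sqrt ((N - 1) / K)) := by ring
      _ = Real.pi := by rw [h1, mul_one]
  have hle : ∀ t : ℝ, t ≤ R → 0 < K → Real.sqrt κ * t ≤ Real.pi := by
    intro t ht hK
    have h2 : Real.sqrt κ * t ≤ Real.sqrt κ * (Real.pi * Real.sqrt ((N - 1) / K)) :=
      mul_le_mul_of_nonneg_left (ht.trans (hRb hK)) (Real.sqrt_nonneg _)
    rwa [hsqrt hK] at h2
  have hKofκ : 0 < κ → 0 < K := by
    intro hk
    have hmul : κ * (N - 1) = K := div_mul_cancel₀ K hN1.ne'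
    nlinarith
  have hlt : ∀ t : ℝ, t < R → 0 < K → Real.sqrt κ * t < Real.pi := by
    intro t ht hK
    have hκpos : 0 < κ := div_pos hK hN1
    have h2 : Real.sqrt κ * t < Real.sqrt κ * R :=
      mul_lt_mul_of_pos_left ht (Real.sqrt_pos.2 hκpos)
    have h3 : Real.sqrt κ * R ≤ Real.pi := by
      have := mul_le_mul_of_nonneg_left (hRb hK) (Real.sqrt_nonneg κ)
      rwa [hsqrt hK] at this
    linarith
  -- continuity / integrability
  have hgc : Continuous g := by
    rw [hgdef]
    exact continuous_iff_continuousAt.2 fun x =>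
      (Real.continuousAt_rpow_const _ _ (Or.inr (by linarith))).comp (sK_cont κ).continuousAt
  have hrD : r ≤ D := hrR.trans hRD
  have hIg1 : IntervalIntegrable g volume 0 r := hgc.intervalIntegrable 0 r
  have hIg2 : IntervalIntegrable g volume r R := hgc.intervalIntegrable r R
  have hIgR : IntervalIntegrable g volume 0 R := hgc.intervalIntegrable 0 R
  have hIh1 : IntervalIntegrable h volume 0 r :=
    (hcont.mono (by rw [Set.uIcc_of_le hr0]; exact Set.Icc_subset_Icc le_rfl hrD)).intervalIntegrable
  have hIh2 : IntervalIntegrable h volume r R :=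
    (hcont.mono (by rw [Set.uIcc_of_le hrR]; exact Set.Icc_subset_Icc hr0 hRD)).intervalIntegrable
  have hIhR : IntervalIntegrable h volume 0 R :=
    (hcont.mono (by rw [Set.uIcc_of_le (hr0.trans hrR)]
                    exact Set.Icc_subset_Icc le_rfl hRD)).intervalIntegrable
  have hRpos : 0 < R := lt_of_lt_of_le hr hrR
  -- positivity of integrals
  have hgpos : ∀ t ∈ Set.Ioo (0:ℝ) R, 0 < g t := fun t ht =>
    Real.rpow_pos_of_pos (sK_pos ht.1 (fun hk => hlt t ht.2 (hKofκ hk))) _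
  have hApos : 0 < ∫ s in (0:ℝ)..r, g s :=
    intervalIntegral.intervalIntegral_pos_of_pos_on hIg1
      (fun x hx => hgpos x ⟨hx.1, lt_of_lt_of_le hx.2 hrR⟩) hr
  have hGRpos : 0 < ∫ s in (0:ℝ)..R, g s :=
    intervalIntegral.intervalIntegral_pos_of_pos_on hIgR (fun x hx => hgpos x hx) hRpos
  have hHrpos : 0 < ∫ s in (0:ℝ)..r, h s :=
    intervalIntegral.intervalIntegral_pos_of_pos_on hIh1
      (fun x hx => hpos x ⟨hx.1.le, hx.2.le.trans hrD⟩) hr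
  have hHRpos : 0 < ∫ s in (0:ℝ)..R, h s :=
    intervalIntegral.intervalIntegral_pos_of_pos_on hIhR
      (fun x hx => hpos x ⟨hx.1.le, hx.2.le.trans hRD⟩) hRpos
  -- key pointwise inequality on (r, R)
  have key : ∀ t ∈ Set.Ioo r R,
      (∫ s in (0:ℝ)..r, g s) * h t ≤ (∫ s in (0:ℝ)..r, h s) * g t := by
    intro t ht
    have htpos : 0 < t := lt_trans hr ht.1
    have hgt : 0 < g t := hgpos t ⟨htpos, ht.2⟩
    have hsKt : 0 < sK κ t := sK_pos htpos (fun hk => hlt t ht.2 (hKofκ hk))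
    have step : ∀ s ∈ Set.Icc (0:ℝ) r, g s * h t ≤ h s * g t := by
      intro s hs
      have hsk : 0 ≤ sK κ s :=
        sK_nonneg hs.1 (fun hk => hle s ((hs.2.trans ht.1.le).trans ht.2.le) (hKofκ hk))
      have hb := hback s t hs.1 (hs.2.trans ht.1.le) (ht.2.le.trans hRD)
        (fun hK => ht.2.le.trans (hRb hK))
      rw [Real.div_rpow hsk hsKt.le] at hb
      calc g s * h t = sK κ s ^ (N - 1) / sK κ t ^ (N - 1) * h t * g t := by
            rw [hgdef]; field_simp
        _ ≤ h s * g t := mul_le_mul_of_nonneg_right hb hgt.le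
    have := intervalIntegral.integral_mono_on hr0 (hIg1.mul_const (h t))
      (hIh1.mul_const (g t)) step
    simpa [intervalIntegral.integral_mul_const] using this
  have hae : (fun t => (∫ s in (0:ℝ)..r, g s) * h t)
      ≤ᵐ[volume.restrict (Set.Icc r R)] fun t => (∫ s in (0:ℝ)..r, h s) * g t := by
    rw [← Measure.restrict_congr_set Ioo_ae_eq_Icc]
    exact ae_restrict_of_forall_mem measurableSet_Ioo key
  have main : (∫ s in (0:ℝ)..r, g s) * (∫ t in r..R, h t)
      ≤ (∫ s in (0:ℝ)..r, h s) * (∫ t in r..R, g t) := by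
    have := intervalIntegral.integral_mono_ae_restrict hrR (hIh2.const_mul _)
      (hIg2.const_mul _) hae
    simpa [intervalIntegral.integral_const_mul] using this
  have hsplitg : (∫ s in (0:ℝ)..R, g s) = (∫ s in (0:ℝ)..r, g s) + ∫ s in r..R, g s :=
    (intervalIntegral.integral_add_adjacent_intervals hIg1 hIg2).symm
  have hsplith : (∫ s in (0:ℝ)..R, h s) = (∫ s in (0:ℝ)..r, h s) + ∫ s in r..R, h s :=
    (intervalIntegral.integral_add_adjacent_intervals hIh1 hIh2).symm
  rw [div_le_div_iff₀ hGRpos hHRpos, hsplitg, hsplith]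
  nlinarith [main]
end
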